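/- arXiv:2604.27424 — 5 statements merged into one kernel-verified Lean document; each statement's English description precedes it below -/
import Mathlib

section
/- For all integers k ≥ 2 and p1, p2 ≥ 1 with p1 + p2 = p ≥ 2, the tree B_{p1,p2,⌊k/2⌋+1} satisfies mdi_k(B_{p1,p2,⌊k/2⌋+1}) ≥ f_k(p·(⌊k/2⌋+1) + 2), with equality if and only if k is odd. -/
/-- `J` is a distance-`k` independent set in `G`: any two distinct vertices of `J`
are at graph distance at least `k + 1`. -/
def DkIndep {V : Type*} (G : SimpleGraph V) (k : ℕ) (J : Set V) : Prop :=
  ∀ ⦃u⦄, u ∈ J → ∀ ⦃v⦄, v ∈ J → u ≠ v → k + 1 ≤ G.dist u v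

/-- `J` is a maximal distance-`k` independent set (`k`-MDIS) of `G`. -/
def MaxDkIndep {V : Type*} (G : SimpleGraph V) (k : ℕ) (J : Set V) : Prop :=
  DkIndep G k J ∧ ∀ J', DkIndep G k J' → J ⊆ J' → J' = J

/-- `mdi G k` is the number of maximal distance-`k` independent sets of `G`. -/
noncomputable def mdi {V : Type*} (G : SimpleGraph V) (k : ℕ) : ℕ :=
  {J : Set V | MaxDkIndep G k J}.ncard

/-- `f_k(n)` from the paper. -/
def fk (k n : ℕ) : ℕ :=
  if n ≤ k + 1 then n else n - (n - k % 2) / (k / 2 + 1) + 1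

/-- closed ball `N_k[x]`. -/
def ball {V : Type*} (G : SimpleGraph V) (k : ℕ) (x : V) : Set V :=
  {v | G.dist x v ≤ k}

/-- a leaf is a vertex of degree 1. -/
def IsLeaf {V : Type*} (G : SimpleGraph V) (v : V) : Prop :=
  (G.neighborSet v).ncard = 1

/-- eccentricity of a vertex. -/
noncomputable def ecc {V : Type*} [Fintype V] (G : SimpleGraph V) (v : V) : ℕ :=
  Finset.univ.sup (G.dist v)

/-- diameter of a finite graph. -/
noncomputable def gdiam {V : Type*} [Fintype V] (G : SimpleGraph V) : ℕ :=
  Finset.univ.sup (ecc G)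

/-- a central vertex is one of minimum eccentricity. -/
def IsCentral {V : Type*} [Fintype V] (G : SimpleGraph V) (v : V) : Prop :=
  ∀ u, ecc G v ≤ ecc G u

/-- a `k`-twin: some other vertex has the same closed `k`-ball. -/
def KTwin {V : Type*} (G : SimpleGraph V) (k : ℕ) (u : V) : Prop :=
  ∃ v, v ≠ u ∧ ball G k u = ball G k v

/-- a diametral leaf: a leaf whose eccentricity equals the diameter. -/
def IsDiametralLeaf {V : Type*} [Fintype V] (G : SimpleGraph V) (u : V) : Prop :=
  IsLeaf G u ∧ ecc G u = gdiam G

/-- a `k`-special pair. -/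
def KSpecial {V : Type*} [Fintype V] (G : SimpleGraph V) (k : ℕ) (x y : V) : Prop :=
  IsDiametralLeaf G x ∧ IsDiametralLeaf G y ∧ KTwin G k x ∧ KTwin G k y ∧
    ball G k x ≠ ball G k y

/-- `mdi*_k(G, ℓ)`. -/
noncomputable def mdiStar {V : Type*} (G : SimpleGraph V) (k : ℕ) (ℓ : V) : ℕ :=
  {J : Set V | MaxDkIndep G k J ∧ ℓ ∈ J ∧ ∃ w ∉ J, ball G k w ∩ J = {ℓ}}.ncard

/-- The spider tree `S_{p,m}`: a center (`none`) together with `p` legs of `m` vertices. -/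
def spider (p m : ℕ) : SimpleGraph (Option (Fin p × Fin m)) :=
  SimpleGraph.fromRel fun a b =>
    match a, b with
    | none, some (_, j) => (j : ℕ) = 0
    | some (i, j), some (i', j') => i = i' ∧ (j : ℕ) + 1 = (j' : ℕ)
    | _, _ => False

/-- `S'_{p,m}`: the spider `S_{p,m}` with one leaf at distance `m` from the center removed. -/
def spider' (p m : ℕ) (hp : 0 < p) (hm : 0 < m) :=
  (spider p m).induce
    {v | v ≠ some (⟨0, hp⟩, ⟨m - 1, Nat.sub_lt hm Nat.one_pos⟩)}

/-- The double spider `B_{p₁,p₂,s}`: two adjacent centers (`Sum.inl false`, `Sum.inl true`),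
with `p₁` legs of `s` vertices on the first and `p₂` legs of `s` vertices on the second. -/
def btree (p₁ p₂ s : ℕ) : SimpleGraph (Bool ⊕ ((Fin p₁ ⊕ Fin p₂) × Fin s)) :=
  SimpleGraph.fromRel fun a b =>
    match a, b with
    | Sum.inl x, Sum.inl y => x ≠ y
    | Sum.inl false, Sum.inr (Sum.inl _, j) => (j : ℕ) = 0
    | Sum.inl true, Sum.inr (Sum.inr _, j) => (j : ℕ) = 0
    | Sum.inr (c, j), Sum.inr (c', j') => c = c' ∧ (j : ℕ) + 1 = (j' : ℕ)
    | _, _ => False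

/-- `G` contains a subgraph isomorphic to `H`. -/
def ContainsSub {V W : Type*} (G : SimpleGraph V) (H : SimpleGraph W) : Prop :=
  ∃ f : W → V, Function.Injective f ∧ ∀ a b, H.Adj a b → G.Adj (f a) (f b)

/-- A pendant path on `s` vertices `P 0, …, P (s-1)` attached to `w`:
`P 0` is a leaf, consecutive vertices are adjacent, interior vertices have degree 2,
and `P (s-1)` is adjacent to `w`. -/
def IsPendantPath {V : Type*} (T : SimpleGraph V) (s : ℕ) (P : ℕ → V) (w : V) : Prop :=
  Set.InjOn P (Set.Iio s) ∧ (∀ i < s, P i ≠ w) ∧ IsLeaf T (P 0) ∧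
    (∀ i, i + 1 < s → T.Adj (P i) (P (i + 1))) ∧
    (∀ i, 0 < i → i < s → (T.neighborSet (P i)).ncard = 2) ∧
    T.Adj (P (s - 1)) w

/-- Isomorphism of simple graphs on `Fin n` as a setoid. -/
def graphSetoid (n : ℕ) : Setoid (SimpleGraph (Fin n)) where
  r G H := Nonempty (G ≃g H)
  iseqv := ⟨fun _ => ⟨SimpleGraph.Iso.refl⟩, fun ⟨e⟩ => ⟨e.symm⟩, fun ⟨e⟩ ⟨f⟩ => ⟨e.trans f⟩⟩

/-- The number of isomorphism classes of graphs in a set of graphs on `Fin n`. -/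
noncomputable def numIsoClasses {n : ℕ} (S : Set (SimpleGraph (Fin n))) : ℕ :=
  ((fun G => Quotient.mk (graphSetoid n) G) '' S).ncard

/-!
Write `s = ⌊k/2⌋ + 1`, so that `k = 2s - 1` or `k = 2s - 2`, and give the two centres depth `0`
and the `j`-th vertex of a leg depth `j + 1`. Two vertices on different legs are at distance
the sum of their depths, plus one if they hang on different centres.

If `x` has depth at most `m`, where `m + s ≤ k < 2s`, every vertex farther than `k` from `x` is a
leaf, and distinct leaves are more than `k` apart. Hence `x` together with all vertices farther
than `k` from it is the unique maximal distance-`k` independent set containing `x`, and these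
sets are distinct for distinct `x`.

For odd `k` take `m = s - 1`: a maximal set avoiding all such `x` consists of leaves, so it is
the set of all leaves, and `mdi = (n - p) + 1 = f_k(n)`. For even `k` take `m = s - 2`: besides
these `2 + p(s - 2)` sets there are the `(p₁ + 1)(p₂ + 1)` sets obtained from the leaves by
replacing at most one leaf on each side by its neighbour, so
`mdi ≥ p(s - 1) + 3 + p₁p₂ > f_k(n)`.
-/

lemma SimpleGraph.dist_eq_of_geodesic {V : Type*} (G : SimpleGraph V) (d : V → V → ℕ)
    (zero_iff : ∀ u v, d u v = 0 ↔ u = v)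
    (triangle : ∀ u v w, d u w ≤ d u v + d v w)
    (adj : ∀ u v, G.Adj u v → d u v = 1)
    (step : ∀ u v, u ≠ v → ∃ w, G.Adj u w ∧ d w v + 1 = d u v) (u v : V) :
    G.dist u v = d u v := by
  have walk : ∀ n u v, d u v = n → ∃ q : G.Walk u v, q.length = n := by
    intro n
    induction n with
    | zero => intro u v h; obtain rfl := (zero_iff u v).1 h; exact ⟨.nil, rfl⟩
    | succ n ih =>
      intro u v h
      obtain ⟨w, huw, hw⟩ := step u v (by rintro rfl; simp [(zero_iff u u).2 rfl] at h)
      obtain ⟨q, hq⟩ := ih w v (by omega)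
      exact ⟨.cons huw q, by simp [hq]⟩
  have le_length : ∀ {u v} (q : G.Walk u v), d u v ≤ q.length := by
    intro u v q
    induction q with
    | nil => simp [(zero_iff _ _).2 rfl]
    | @cons a b c hab q ih =>
      have := triangle a b c
      have := adj a b hab
      simp only [SimpleGraph.Walk.length_cons]
      omega
  obtain ⟨q, hq⟩ := walk _ u v rfl
  obtain ⟨q', hq'⟩ := SimpleGraph.Reachable.exists_walk_length_eq_dist ⟨q⟩
  exact le_antisymm (hq ▸ G.dist_le q) (hq' ▸ le_length q')

section Independence

variable {V : Type*} {G : SimpleGraph V} {k : ℕ}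

lemma maxDkIndep_of_dominating {J : Set V} (hJ : DkIndep G k J)
    (hdom : ∀ v, ∃ u ∈ J, G.dist u v ≤ k) : MaxDkIndep G k J := by
  refine ⟨hJ, fun J' hJ' hsub => Set.Subset.antisymm (fun v hv => ?_) hsub⟩
  obtain ⟨u, hu, huv⟩ := hdom v
  by_contra hvJ
  have := hJ' (hsub hu) hv (by rintro rfl; exact hvJ hu)
  omega

def farSet (G : SimpleGraph V) (k : ℕ) (x : V) : Set V :=
  {v | v = x ∨ k < G.dist x v}

lemma dkIndep_farSet {x : V}
    (h : ∀ u v, k < G.dist x u → k < G.dist x v → u ≠ v → k + 1 ≤ G.dist u v) :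
    DkIndep G k (farSet G k x) := by
  rintro u (rfl | hu) v (rfl | hv) huv
  · exact absurd rfl huv
  · exact hv
  · rw [G.dist_comm]; exact hu
  · exact h u v hu hv huv

lemma maxDkIndep_farSet {x : V} (h : DkIndep G k (farSet G k x)) :
    MaxDkIndep G k (farSet G k x) := by
  refine maxDkIndep_of_dominating h fun v => ?_
  rcases le_or_gt (G.dist x v) k with hv | hv
  · exact ⟨x, Or.inl rfl, hv⟩
  · exact ⟨v, Or.inr hv, by simp⟩

lemma MaxDkIndep.eq_farSet {J : Set V} {x : V} (hJ : MaxDkIndep G k J) (hx : x ∈ J)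
    (h : DkIndep G k (farSet G k x)) : J = farSet G k x := by
  refine (hJ.2 _ h fun v hv => ?_).symm
  by_cases hvx : v = x
  · exact Or.inl hvx
  · exact Or.inr (hJ.1 hx hv (Ne.symm hvx))

end Independence

lemma Bool.toNat_xor_le_add (a b c : Bool) :
    (a ^^ c).toNat ≤ (a ^^ b).toNat + (b ^^ c).toNat := by
  cases a <;> cases b <;> cases c <;> decide

namespace btree

abbrev Vertex (p₁ p₂ s : ℕ) := Bool ⊕ ((Fin p₁ ⊕ Fin p₂) × Fin s)

variable {p₁ p₂ s : ℕ}

def depth : Vertex p₁ p₂ s → ℕ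
  | .inl _ => 0
  | .inr (_, j) => j + 1

def side : Vertex p₁ p₂ s → Bool
  | .inl b => b
  | .inr (c, _) => c.isRight

@[simp] lemma depth_inl (b : Bool) : depth (.inl b : Vertex p₁ p₂ s) = 0 := rfl
@[simp] lemma depth_inr (c : Fin p₁ ⊕ Fin p₂) (j : Fin s) :
    depth (.inr (c, j) : Vertex p₁ p₂ s) = j + 1 := rfl
@[simp] lemma side_inl (b : Bool) : side (.inl b : Vertex p₁ p₂ s) = b := rfl
@[simp] lemma side_inr (c : Fin p₁ ⊕ Fin p₂) (j : Fin s) :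
    side (.inr (c, j) : Vertex p₁ p₂ s) = c.isRight := rfl

def SameLeg : Vertex p₁ p₂ s → Vertex p₁ p₂ s → Prop
  | .inr (c, _), .inr (c', _) => c = c'
  | _, _ => False

@[simp] lemma sameLeg_inr {c c' : Fin p₁ ⊕ Fin p₂} {j j' : Fin s} :
    SameLeg (.inr (c, j) : Vertex p₁ p₂ s) (.inr (c', j')) ↔ c = c' := Iff.rfl

instance : DecidableRel (SameLeg (p₁ := p₁) (p₂ := p₂) (s := s))
  | .inr (c, _), .inr (c', _) => decEq c c'
  | .inl _, _ => isFalse id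
  | .inr _, .inl _ => isFalse id

def treeDist (u v : Vertex p₁ p₂ s) : ℕ :=
  if SameLeg u v then depth u - depth v + (depth v - depth u)
  else depth u + depth v + (side u ^^ side v).toNat

lemma treeDist_of_sameLeg {u v : Vertex p₁ p₂ s} (h : SameLeg u v) :
    treeDist u v = depth u - depth v + (depth v - depth u) := by
  rw [treeDist, if_pos h]

lemma treeDist_of_not_sameLeg {u v : Vertex p₁ p₂ s} (h : ¬SameLeg u v) :
    treeDist u v = depth u + depth v + (side u ^^ side v).toNat := by
  rw [treeDist, if_neg h]

@[simp] lemma treeDist_inr_inr_self (c : Fin p₁ ⊕ Fin p₂) (j j' : Fin s) :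
    treeDist (.inr (c, j) : Vertex p₁ p₂ s) (.inr (c, j')) = j - j' + (j' - j) := by
  rw [treeDist_of_sameLeg (sameLeg_inr.2 rfl), depth_inr, depth_inr]
  omega

lemma SameLeg.symm {u v : Vertex p₁ p₂ s} (h : SameLeg u v) : SameLeg v u := by
  rcases u with _ | ⟨c, _⟩ <;> rcases v with _ | ⟨c', _⟩ <;>
    first | exact h.elim | exact Eq.symm h

lemma SameLeg.trans {u v w : Vertex p₁ p₂ s} (h : SameLeg u v) (h' : SameLeg v w) :
    SameLeg u w := by
  rcases u with _ | ⟨c, _⟩ <;> rcases v with _ | ⟨c', _⟩ <;>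
    rcases w with _ | ⟨c'', _⟩ <;> first | exact h.elim | exact h'.elim | exact Eq.trans h h'

lemma SameLeg.side_eq {u v : Vertex p₁ p₂ s} (h : SameLeg u v) : side u = side v := by
  rcases u with _ | ⟨c, _⟩ <;> rcases v with _ | ⟨c', _⟩
  · exact h.elim
  · exact h.elim
  · exact h.elim
  · exact congrArg Sum.isRight (show c = c' from h)

lemma SameLeg.eq_of_depth_eq {u v : Vertex p₁ p₂ s} (h : SameLeg u v)
    (hd : depth u = depth v) : u = v := by
  rcases u with _ | ⟨c, j⟩ <;> rcases v with _ | ⟨c', j'⟩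
  · exact h.elim
  · exact h.elim
  · exact h.elim
  · obtain rfl : c = c' := h
    simp only [depth, add_left_inj] at hd
    rw [Fin.ext hd]

lemma treeDist_eq_zero_iff (u v : Vertex p₁ p₂ s) : treeDist u v = 0 ↔ u = v := by
  by_cases h : SameLeg u v
  · rw [treeDist_of_sameLeg h]
    exact ⟨fun h0 => h.eq_of_depth_eq (by omega), by rintro rfl; simp⟩
  · rw [treeDist_of_not_sameLeg h]
    rcases u with a | ⟨c, j⟩ <;> rcases v with b | ⟨c', j'⟩ <;>
      simp_all [depth, side, SameLeg]

lemma treeDist_triangle (u v w : Vertex p₁ p₂ s) :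
    treeDist u w ≤ treeDist u v + treeDist v w := by
  by_cases huv : SameLeg u v <;> by_cases hvw : SameLeg v w
  · rw [treeDist_of_sameLeg (huv.trans hvw), treeDist_of_sameLeg huv, treeDist_of_sameLeg hvw]
    omega
  · have huw : ¬SameLeg u w := fun huw => hvw (huv.symm.trans huw)
    rw [treeDist_of_not_sameLeg huw, treeDist_of_sameLeg huv, treeDist_of_not_sameLeg hvw,
      huv.side_eq]
    omega
  · have huw : ¬SameLeg u w := fun huw => huv (huw.trans hvw.symm)
    rw [treeDist_of_not_sameLeg huw, treeDist_of_not_sameLeg huv, treeDist_of_sameLeg hvw,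
      ← hvw.side_eq]
    omega
  · have := Bool.toNat_xor_le_add (side u) (side v) (side w)
    rw [treeDist_of_not_sameLeg huv, treeDist_of_not_sameLeg hvw]
    by_cases huw : SameLeg u w
    · rw [treeDist_of_sameLeg huw]; omega
    · rw [treeDist_of_not_sameLeg huw]; omega

lemma adj_iff (u v : Vertex p₁ p₂ s) : (btree p₁ p₂ s).Adj u v ↔ treeDist u v = 1 := by
  rw [btree, SimpleGraph.fromRel_adj, treeDist]
  rcases u with (_ | _) | ⟨(i | i), j⟩ <;> rcases v with (_ | _) | ⟨(i' | i'), j'⟩ <;>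
    simp only [ne_eq, Sum.inl.injEq, Sum.inr.injEq, Prod.ext_iff, Fin.ext_iff, reduceCtorEq,
      Bool.false_eq_true, Bool.true_eq_false, not_true_eq_false, not_false_eq_true, and_false,
      false_and, true_and, or_false, false_or, and_self, or_self, SameLeg, depth, side,
      Sum.isRight_inl, Sum.isRight_inr, Bool.bne_true, Bool.bne_false, bne_self_eq_false,
      Bool.not_false, Bool.toNat_true, Bool.toNat_false, ↓reduceIte, false_iff] <;>
    (try split_ifs) <;> omega

lemma exists_treeDist_succ_of_not_sameLeg (c : Fin p₁ ⊕ Fin p₂) (j : Fin s)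
    {v : Vertex p₁ p₂ s} (hv : ¬SameLeg (.inr (c, j)) v) :
    ∃ w, treeDist (.inr (c, j)) w = 1 ∧ treeDist w v + 1 = treeDist (.inr (c, j)) v := by
  rw [treeDist_of_not_sameLeg hv]
  by_cases hj : (j : ℕ) = 0
  · refine ⟨.inl c.isRight, by simp [treeDist, SameLeg, hj], ?_⟩
    rw [treeDist_of_not_sameLeg (by rintro ⟨⟩)]
    simp only [depth_inl, depth_inr, side_inl, side_inr, hj]
    omega
  · refine ⟨.inr (c, ⟨j - 1, by omega⟩), by simp only [treeDist_inr_inr_self]; omega, ?_⟩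
    rw [treeDist_of_not_sameLeg (by rcases v with _ | ⟨c', _⟩ <;> exact hv)]
    simp only [depth_inr, side_inr]
    omega

lemma exists_adj_treeDist_succ {u v : Vertex p₁ p₂ s} (huv : u ≠ v) :
    ∃ w, (btree p₁ p₂ s).Adj u w ∧ treeDist w v + 1 = treeDist u v := by
  simp only [adj_iff]
  rcases u with b | ⟨c, j⟩ <;> rcases v with b' | ⟨c', j'⟩
  · refine ⟨.inl b', ?_⟩
    have : b ≠ b' := fun h => huv (h ▸ rfl)
    cases b <;> cases b' <;> simp_all [treeDist, SameLeg]
  · by_cases hb : c'.isRight = b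
    · refine ⟨.inr (c', ⟨0, j'.pos⟩), ?_⟩
      simp [treeDist, SameLeg, hb]
    · refine ⟨.inl c'.isRight, ?_⟩
      rcases c' with i | i <;> cases b <;> simp_all [treeDist, SameLeg]
  · exact exists_treeDist_succ_of_not_sameLeg c j (by rintro ⟨⟩)
  · by_cases hc : c = c'
    · subst hc
      have hj : (j : ℕ) ≠ j' := fun h => huv (by rw [Fin.ext h])
      rcases Nat.lt_or_gt_of_ne hj with hj | hj
      · refine ⟨.inr (c, ⟨j + 1, by omega⟩), ?_⟩
        simp only [treeDist_inr_inr_self]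
        omega
      · refine ⟨.inr (c, ⟨j - 1, by omega⟩), ?_⟩
        simp only [treeDist_inr_inr_self]
        omega
    · exact exists_treeDist_succ_of_not_sameLeg c j hc

lemma dist_eq (u v : Vertex p₁ p₂ s) : (btree p₁ p₂ s).dist u v = treeDist u v :=
  SimpleGraph.dist_eq_of_geodesic _ _ treeDist_eq_zero_iff treeDist_triangle
    (fun u v h => (adj_iff u v).1 h) (fun _ _ => exists_adj_treeDist_succ) u v

lemma depth_le (v : Vertex p₁ p₂ s) : depth v ≤ s := by
  rcases v with _ | ⟨_, j⟩
  · simp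
  · simp [Nat.succ_le_of_lt j.isLt]

lemma treeDist_le (u v : Vertex p₁ p₂ s) : treeDist u v ≤ depth u + depth v + 1 := by
  by_cases h : SameLeg u v
  · rw [treeDist_of_sameLeg h]; omega
  · rw [treeDist_of_not_sameLeg h]; have := (side u ^^ side v).toNat_le; omega

lemma two_mul_le_treeDist {u v : Vertex p₁ p₂ s} (huv : u ≠ v) (hu : depth u = s)
    (hv : depth v = s) : 2 * s ≤ treeDist u v := by
  have h : ¬SameLeg u v := fun h => huv (h.eq_of_depth_eq (hu.trans hv.symm))
  rw [treeDist_of_not_sameLeg h]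
  omega

variable {k m : ℕ}

lemma depth_eq_of_lt_dist {x v : Vertex p₁ p₂ s} (hx : depth x ≤ m) (hmk : m + s ≤ k)
    (h : k < (btree p₁ p₂ s).dist x v) : depth v = s := by
  have := treeDist_le x v
  have := depth_le v
  rw [dist_eq] at h
  by_contra
  omega

lemma dkIndep_leaves (hk : k < 2 * s) : DkIndep (btree p₁ p₂ s) k {v | depth v = s} := by
  intro u hu v hv huv
  rw [dist_eq]
  have := two_mul_le_treeDist huv hu hv
  omega

lemma dkIndep_farSet_of_depth_le {x : Vertex p₁ p₂ s} (hx : depth x ≤ m) (hmk : m + s ≤ k)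
    (hk : k < 2 * s) :
    DkIndep (btree p₁ p₂ s) k (farSet (btree p₁ p₂ s) k x) :=
  dkIndep_farSet fun _ _ hu hv => dkIndep_leaves hk
    (depth_eq_of_lt_dist hx hmk hu) (depth_eq_of_lt_dist hx hmk hv)

lemma injOn_farSet (hmk : m + s ≤ k) (hk : k < 2 * s) :
    Set.InjOn (farSet (btree p₁ p₂ s) k) {v | depth v ≤ m} := by
  intro x hx y hy hxy
  have hy' : y ∈ farSet (btree p₁ p₂ s) k x := hxy ▸ Or.inl rfl
  rcases hy' with rfl | hy'
  · rfl
  · have := depth_eq_of_lt_dist hx hmk hy'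
    simp only [Set.mem_ofPred_eq] at hy
    omega

lemma dominating_of_forall_leg (hp₁ : 1 ≤ p₁) (hp₂ : 1 ≤ p₂) (hsk : s ≤ k)
    {J : Set (Vertex p₁ p₂ s)} (hJ : ∀ c, ∃ j, .inr (c, j) ∈ J) :
    ∀ v, ∃ u ∈ J, (btree p₁ p₂ s).dist u v ≤ k := by
  intro v
  simp only [dist_eq]
  rcases v with b | ⟨c, j⟩
  · obtain ⟨c, hc⟩ : ∃ c : Fin p₁ ⊕ Fin p₂, c.isRight = b := by
      cases b
      exacts [⟨.inl ⟨0, hp₁⟩, rfl⟩, ⟨.inr ⟨0, hp₂⟩, rfl⟩]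
    obtain ⟨j, hj⟩ := hJ c
    refine ⟨_, hj, ?_⟩
    rw [treeDist_of_not_sameLeg (by rintro ⟨⟩), depth_inr, depth_inl, side_inr, side_inl, hc,
      Bool.xor_self, Bool.toNat_false]
    omega
  · obtain ⟨j', hj'⟩ := hJ c
    refine ⟨_, hj', ?_⟩
    rw [treeDist_inr_inr_self]
    omega

lemma maxDkIndep_leaves (hp₁ : 1 ≤ p₁) (hp₂ : 1 ≤ p₂) (hsk : s ≤ k) (hk : k < 2 * s) :
    MaxDkIndep (btree p₁ p₂ s) k {v | depth v = s} :=
  maxDkIndep_of_dominating (dkIndep_leaves hk) <| dominating_of_forall_leg hp₁ hp₂ hsk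
    fun c => ⟨⟨s - 1, by omega⟩, by simp only [Set.mem_ofPred_eq, depth_inr]; omega⟩

lemma ncard_depth_le (hm : m ≤ s) :
    {v : Vertex p₁ p₂ s | depth v ≤ m}.ncard = 2 + (p₁ + p₂) * m := by
  induction m with
  | zero =>
    have : {v : Vertex p₁ p₂ s | depth v ≤ 0} = Set.range Sum.inl := by
      ext (_ | ⟨_, _⟩) <;> simp
    rw [this, Set.ncard_range_of_injective Sum.inl_injective]
    simp
  | succ m ih =>
    have hsplit : {v : Vertex p₁ p₂ s | depth v ≤ m + 1} =
        {v | depth v ≤ m} ∪ Set.range fun c => .inr (c, ⟨m, hm⟩) := by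
      ext (_ | ⟨c, j⟩) <;> simp [Fin.ext_iff, Nat.le_succ_iff, eq_comm]
    have hinj : Function.Injective fun c : Fin p₁ ⊕ Fin p₂ =>
        (.inr (c, ⟨m, hm⟩) : Vertex p₁ p₂ s) := fun c c' h => by simpa using h
    rw [hsplit, Set.ncard_union_eq, ih (by omega), Set.ncard_range_of_injective hinj]
    · simp only [Nat.card_eq_fintype_card, Fintype.card_sum, Fintype.card_fin]
      ring
    · rw [Set.disjoint_right]
      rintro _ ⟨c, rfl⟩
      simp

lemma setOf_maxDkIndep_odd (hp₁ : 1 ≤ p₁) (hp₂ : 1 ≤ p₂) (hs : 1 ≤ s) :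
    {J | MaxDkIndep (btree p₁ p₂ s) (2 * s - 1) J} =
      insert {v | depth v = s}
        (farSet (btree p₁ p₂ s) (2 * s - 1) '' {v | depth v ≤ s - 1}) := by
  ext J
  constructor
  · intro hJ
    by_cases h : ∃ x ∈ J, depth x ≤ s - 1
    · obtain ⟨x, hxJ, hx⟩ := h
      have := dkIndep_farSet_of_depth_le hx (k := 2 * s - 1) (by omega) (by omega)
      exact Or.inr ⟨x, hx, (hJ.eq_farSet hxJ this).symm⟩
    · push Not at h
      refine Or.inl (hJ.2 _ (dkIndep_leaves (by omega)) fun v hv => ?_).symm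
      have := h v hv
      have := depth_le v
      simp only [Set.mem_ofPred_eq]
      omega
  · rintro (rfl | ⟨x, hx, rfl⟩)
    · exact maxDkIndep_leaves hp₁ hp₂ (by omega) (by omega)
    · exact maxDkIndep_farSet (dkIndep_farSet_of_depth_le hx (by omega) (by omega))

lemma mdi_odd (hp₁ : 1 ≤ p₁) (hp₂ : 1 ≤ p₂) (hs : 1 ≤ s) :
    mdi (btree p₁ p₂ s) (2 * s - 1) = 2 + (p₁ + p₂) * (s - 1) + 1 := by
  have hleaves :
      {v | depth v = s} ∉ farSet (btree p₁ p₂ s) (2 * s - 1) '' {v | depth v ≤ s - 1} := by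
    rintro ⟨x, hx, hxs⟩
    have hx' : x ∈ {v : Vertex p₁ p₂ s | depth v = s} := hxs ▸ Or.inl rfl
    simp only [Set.mem_ofPred_eq] at hx hx'
    omega
  rw [mdi, setOf_maxDkIndep_odd hp₁ hp₂ hs, Set.ncard_insert_of_notMem hleaves,
    (injOn_farSet (by omega) (by omega)).ncard_image, ncard_depth_le (by omega)]

def isLifted (o₁ : Option (Fin p₁)) (o₂ : Option (Fin p₂)) : Fin p₁ ⊕ Fin p₂ → Bool
  | .inl i => o₁ == some i
  | .inr i => o₂ == some i

lemma eq_of_isLifted {o₁ : Option (Fin p₁)} {o₂ : Option (Fin p₂)}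
    {c c' : Fin p₁ ⊕ Fin p₂} (hc : isLifted o₁ o₂ c) (hc' : isLifted o₁ o₂ c')
    (h : c.isRight = c'.isRight) : c = c' := by
  rcases c with i | i <;> rcases c' with i' | i' <;> simp_all [isLifted]

/-- The leaves, except that on the legs selected by `o₁` and `o₂` (at most one per side) the
neighbour of the leaf is taken instead. -/
def liftedLeaves (o₁ : Option (Fin p₁)) (o₂ : Option (Fin p₂)) : Set (Vertex p₁ p₂ s) :=
  {v | ∃ c j, v = .inr (c, j) ∧ (j : ℕ) + 1 + (isLifted o₁ o₂ c).toNat = s}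

lemma inr_mem_liftedLeaves {o₁ : Option (Fin p₁)} {o₂ : Option (Fin p₂)}
    {c : Fin p₁ ⊕ Fin p₂} {j : Fin s} :
    .inr (c, j) ∈ liftedLeaves o₁ o₂ ↔ (j : ℕ) + 1 + (isLifted o₁ o₂ c).toNat = s :=
  ⟨fun ⟨_, _, h, hc⟩ => by cases h; exact hc, fun h => ⟨c, j, rfl, h⟩⟩

lemma dkIndep_liftedLeaves (o₁ : Option (Fin p₁)) (o₂ : Option (Fin p₂)) :
    DkIndep (btree p₁ p₂ s) (2 * s - 2) (liftedLeaves o₁ o₂) := by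
  rintro _ ⟨c, j, rfl, hj⟩ _ ⟨c', j', rfl, hj'⟩ huv
  rw [dist_eq]
  by_cases hcc : c = c'
  · subst hcc
    exact (huv (by rw [Fin.ext (show (j : ℕ) = j' by omega)])).elim
  · rw [treeDist_of_not_sameLeg (sameLeg_inr.not.2 hcc)]
    simp only [depth_inr, side_inr]
    by_cases hside : c.isRight = c'.isRight
    · have : (isLifted o₁ o₂ c).toNat + (isLifted o₁ o₂ c').toNat ≤ 1 := by
        cases hl : isLifted o₁ o₂ c <;> cases hl' : isLifted o₁ o₂ c' <;> try decide
        exact absurd (eq_of_isLifted hl hl' hside) hcc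
      rw [hside, Bool.xor_self, Bool.toNat_false]
      omega
    · have : (c.isRight ^^ c'.isRight).toNat = 1 := by
        revert hside; cases c.isRight <;> cases c'.isRight <;> decide
      have := (isLifted o₁ o₂ c).toNat_le
      have := (isLifted o₁ o₂ c').toNat_le
      omega

lemma maxDkIndep_liftedLeaves (hp₁ : 1 ≤ p₁) (hp₂ : 1 ≤ p₂) (hs : 2 ≤ s)
    (o₁ : Option (Fin p₁)) (o₂ : Option (Fin p₂)) :
    MaxDkIndep (btree p₁ p₂ s) (2 * s - 2) (liftedLeaves o₁ o₂) := by
  refine maxDkIndep_of_dominating (dkIndep_liftedLeaves o₁ o₂)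
    (dominating_of_forall_leg hp₁ hp₂ (by omega) fun c => ?_)
  have := (isLifted o₁ o₂ c).toNat_le
  exact ⟨⟨s - 1 - (isLifted o₁ o₂ c).toNat, by omega⟩,
    inr_mem_liftedLeaves.2 (by dsimp only; omega)⟩

lemma liftedLeaves_injective (hs : 2 ≤ s) :
    Function.Injective fun o : Option (Fin p₁) × Option (Fin p₂) =>
      (liftedLeaves o.1 o.2 : Set (Vertex p₁ p₂ s)) := by
  rintro ⟨o₁, o₂⟩ ⟨o₁', o₂'⟩ (h : liftedLeaves o₁ o₂ = liftedLeaves o₁' o₂')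
  have hmem : ∀ (o₁ : Option (Fin p₁)) (o₂ : Option (Fin p₂)) c,
      .inr (c, ⟨s - 2, by omega⟩) ∈ (liftedLeaves o₁ o₂ : Set (Vertex p₁ p₂ s)) ↔
        isLifted o₁ o₂ c := fun o₁ o₂ c => by
    rw [inr_mem_liftedLeaves]
    cases isLifted o₁ o₂ c <;>
      simp only [Bool.toNat_true, Bool.toNat_false, Bool.false_eq_true, iff_false, iff_true] <;>
      omega
  have key : ∀ c, isLifted o₁ o₂ c = isLifted o₁' o₂' c := fun c =>
    Bool.eq_iff_iff.2 (by rw [← hmem, ← hmem, h])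
  simp only [Prod.mk.injEq]
  exact ⟨Option.ext fun i => by simpa [isLifted] using key (.inl i),
    Option.ext fun i => by simpa [isLifted] using key (.inr i)⟩

lemma card_le_mdi_even (hp₁ : 1 ≤ p₁) (hp₂ : 1 ≤ p₂) (hs : 2 ≤ s) :
    2 + (p₁ + p₂) * (s - 2) + (p₁ + 1) * (p₂ + 1) ≤
      mdi (btree p₁ p₂ s) (2 * s - 2) := by
  set F := farSet (btree p₁ p₂ s) (2 * s - 2) '' {v | depth v ≤ s - 2}
  set L := Set.range fun o : Option (Fin p₁) × Option (Fin p₂) =>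
    (liftedLeaves o.1 o.2 : Set (Vertex p₁ p₂ s))
  have hdisj : Disjoint F L := by
    rw [Set.disjoint_left]
    rintro _ ⟨x, hx, rfl⟩ ⟨o, ho⟩
    obtain ⟨c, j, rfl, hj⟩ : x ∈ liftedLeaves o.1 o.2 := by
      rw [show liftedLeaves o.1 o.2 = _ from ho]; exact Or.inl rfl
    simp only [Set.mem_ofPred_eq, depth_inr] at hx
    have := (isLifted o.1 o.2 c).toNat_le
    omega
  have hsub : F ∪ L ⊆ {J | MaxDkIndep (btree p₁ p₂ s) (2 * s - 2) J} := by
    rintro _ (⟨x, hx, rfl⟩ | ⟨o, rfl⟩)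
    · exact maxDkIndep_farSet (dkIndep_farSet_of_depth_le hx (by omega) (by omega))
    · exact maxDkIndep_liftedLeaves hp₁ hp₂ hs o.1 o.2
  calc 2 + (p₁ + p₂) * (s - 2) + (p₁ + 1) * (p₂ + 1) = (F ∪ L).ncard := by
        rw [Set.ncard_union_eq hdisj, (injOn_farSet (by omega) (by omega)).ncard_image,
          ncard_depth_le (by omega), Set.ncard_range_of_injective (liftedLeaves_injective hs)]
        simp
    _ ≤ mdi (btree p₁ p₂ s) (2 * s - 2) := Set.ncard_le_ncard hsub

end btree

lemma fk_le {k p : ℕ} (hk : 2 ≤ k) (hp : 2 ≤ p) :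
    fk k (p * (k / 2 + 1) + 2) ≤ p * (k / 2) + 3 := by
  have hdiv : p ≤ (p * (k / 2 + 1) + 2 - k % 2) / (k / 2 + 1) :=
    (Nat.le_div_iff_mul_le (by omega)).2 (by have := Nat.mod_lt k two_pos; omega)
  have hpk : 2 * (k / 2) ≤ p * (k / 2) := Nat.mul_le_mul_right _ hp
  rw [fk, if_neg (by rw [mul_add]; omega)]
  rw [mul_add] at hdiv ⊢
  omega

lemma fk_of_odd {k p : ℕ} (hk : 2 ≤ k) (hodd : Odd k) (hp : 2 ≤ p) :
    fk k (p * (k / 2 + 1) + 2) = p * (k / 2) + 3 := by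
  have hr : k % 2 = 1 := Nat.odd_iff.1 hodd
  have hdiv : (p * (k / 2 + 1) + 2 - k % 2) / (k / 2 + 1) = p :=
    Nat.div_eq_of_lt_le (by omega) (by rw [Nat.succ_mul]; omega)
  have hpk : 2 * (k / 2) ≤ p * (k / 2) := Nat.mul_le_mul_right _ hp
  rw [fk, if_neg (by rw [mul_add]; omega), hdiv, mul_add]
  omega

/-- For `k ≥ 2`, `p₁, p₂ ≥ 1` with `p₁ + p₂ = p`,
`mdi_k(B_{p₁,p₂,⌊k/2⌋+1}) ≥ f_k(p(⌊k/2⌋+1)+2)` with equality iff `k` is odd. -/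
theorem stmt_2 (k p₁ p₂ p : ℕ) (hk : 2 ≤ k) (h₁ : 1 ≤ p₁) (h₂ : 1 ≤ p₂)
    (hp : p₁ + p₂ = p) :
    fk k (p * (k / 2 + 1) + 2) ≤ mdi (btree p₁ p₂ (k / 2 + 1)) k ∧
    (mdi (btree p₁ p₂ (k / 2 + 1)) k = fk k (p * (k / 2 + 1) + 2) ↔ Odd k) := by
  subst hp
  have hp : 2 ≤ p₁ + p₂ := by omega
  rcases Nat.even_or_odd' k with ⟨t, rfl | rfl⟩
  · obtain ⟨t, rfl⟩ : ∃ t', t = t' + 1 := ⟨t - 1, by omega⟩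
    have hfk := fk_le hk hp
    have hmdi := btree.card_le_mdi_even h₁ h₂ (s := t + 1 + 1) (by omega)
    rw [show 2 * (t + 1) / 2 = t + 1 by omega] at hfk ⊢
    rw [show 2 * (t + 1 + 1) - 2 = 2 * (t + 1) by omega, show t + 1 + 1 - 2 = t by omega] at hmdi
    have : 1 ≤ p₁ * p₂ := Nat.mul_le_mul h₁ h₂
    have hlt := hfk.trans_lt (lt_of_lt_of_le (by nlinarith) hmdi)
    exact ⟨hlt.le, fun h => absurd h hlt.ne',
      fun h => absurd h (Nat.not_odd_iff_even.2 (even_two_mul _))⟩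
  · have hfk := fk_of_odd hk (odd_two_mul_add_one t) hp
    have hmdi := btree.mdi_odd h₁ h₂ (s := t + 1) (by omega)
    rw [show (2 * t + 1) / 2 = t by omega] at hfk ⊢
    rw [show 2 * (t + 1) - 1 = 2 * t + 1 by omega, show t + 1 - 1 = t by omega] at hmdi
    rw [hfk, hmdi]
    exact ⟨by omega, fun _ => odd_two_mul_add_one t, fun _ => by ring⟩
end

section
/- Let T be a tree with a leaf ℓ. Then for all integers k ≥ 1, mdi_k(T) = mdi_k(T ∖ ℓ) + mdi*_k(T, ℓ), where T ∖ ℓ is the tree obtained from T by deleting ℓ. -/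
open SimpleGraph in
lemma my_splice {V : Type} {T : SimpleGraph V} {ℓ : V} (hℓ : IsLeaf T ℓ) {u v : V}
    (p : T.Walk u v) (hu : u ≠ ℓ) (hv : v ≠ ℓ) (hp : ℓ ∈ p.support) :
    ∃ q : T.Walk u v, q.length + 2 = p.length := by
  classical
  obtain ⟨n, hn⟩ := Set.ncard_eq_one.mp hℓ
  have hspec := p.take_spec hp
  obtain ⟨a, ha, p2', hp2⟩ := Walk.exists_eq_cons_of_ne (Ne.symm hv) (p.dropUntil ℓ hp)
  obtain ⟨b, hb, q, hq⟩ := Walk.exists_eq_cons_of_ne (Ne.symm hu) (p.takeUntil ℓ hp).reverse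
  have hab : a = b := by
    have h1 : a ∈ T.neighborSet ℓ := ha
    have h2 : b ∈ T.neighborSet ℓ := hb
    rw [hn] at h1 h2
    simp only [Set.mem_singleton_iff] at h1 h2
    rw [h1, h2]
  refine ⟨q.reverse.append (p2'.copy hab rfl), ?_⟩
  have hlp := congrArg Walk.length hspec
  rw [Walk.length_append] at hlp
  have h1 := congrArg Walk.length hq
  rw [Walk.length_reverse, Walk.length_cons] at h1
  have h2 := congrArg Walk.length hp2
  rw [Walk.length_cons] at h2
  simp only [Walk.length_append, Walk.length_reverse, Walk.length_copy]
  omega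

open SimpleGraph in
lemma my_lift {V : Type} {T : SimpleGraph V} {S : Set V} :
    ∀ {u v : V} (p : T.Walk u v) (hp : ∀ x ∈ p.support, x ∈ S),
    ∃ q : (T.induce S).Walk ⟨u, hp u p.start_mem_support⟩ ⟨v, hp v p.end_mem_support⟩,
      q.length = p.length := by
  intro u v p
  induction p with
  | nil => exact fun hp => ⟨.nil, rfl⟩
  | @cons u b v h p ih =>
      intro hp
      obtain ⟨q, hq⟩ := ih (fun x hx => hp x (by simp [hx]))
      exact ⟨.cons (by simpa using h) q, by simp [hq]⟩

open SimpleGraph in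
lemma my_dist {V : Type} {T : SimpleGraph V} {ℓ : V} (hT : T.IsTree) (hℓ : IsLeaf T ℓ)
    (u v : {v : V | v ≠ ℓ}) :
    (T.induce {v : V | v ≠ ℓ}).dist u v = T.dist ↑u ↑v := by
  rcases eq_or_ne u v with rfl | huv
  · simp [SimpleGraph.dist_self]
  obtain ⟨p, hp⟩ := (hT.isConnected.preconnected u.1 v.1).exists_walk_length_eq_dist
  have hsup : ℓ ∉ p.support := by
    intro hmem
    obtain ⟨q, hq⟩ := my_splice hℓ p u.2 v.2 hmem
    have := SimpleGraph.dist_le q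
    omega
  obtain ⟨q, hq⟩ := my_lift (S := {v : V | v ≠ ℓ}) p
    (fun x hx => by rintro rfl; exact hsup hx)
  refine le_antisymm ?_ ?_
  · calc (T.induce {v : V | v ≠ ℓ}).dist u v ≤ q.length := SimpleGraph.dist_le q
      _ = T.dist ↑u ↑v := by rw [hq, hp]
  · obtain ⟨r, hr⟩ := SimpleGraph.Reachable.exists_walk_length_eq_dist (⟨q⟩ : (T.induce {v : V | v ≠ ℓ}).Reachable u v)
    calc T.dist ↑u ↑v ≤ (r.map (SimpleGraph.Embedding.induce {v : V | v ≠ ℓ}).toHom).length :=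
          SimpleGraph.dist_le _
      _ = (T.induce {v : V | v ≠ ℓ}).dist u v := by rw [Walk.length_map, hr]

/-- For a tree `T` with leaf `ℓ` and `k ≥ 1`,
`mdi_k(T) = mdi_k(T ∖ ℓ) + mdi*_k(T, ℓ)`. -/

theorem stmt_3 {V : Type} [Fintype V] (T : SimpleGraph V) (hT : T.IsTree)
    (ℓ : V) (hℓ : IsLeaf T ℓ) (k : ℕ) (hk : 1 ≤ k) :
    mdi T k = mdi (T.induce {v | v ≠ ℓ}) k + mdiStar T k ℓ := by
  classical
  set S : Set V := {v | v ≠ ℓ} with hS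
  have hdist : ∀ u v : ↥S, (T.induce S).dist u v = T.dist u.1 v.1 := my_dist hT hℓ
  have hup : ∀ J' : Set ↥S, DkIndep (T.induce S) k J' → DkIndep T k (Subtype.val '' J') := by
    rintro J' h x ⟨x', hx', rfl⟩ y ⟨y', hy', rfl⟩ hxy
    rw [← hdist]
    exact h hx' hy' fun e => hxy (congrArg Subtype.val e)
  have hdown : ∀ J : Set V, DkIndep T k J → DkIndep (T.induce S) k (Subtype.val ⁻¹' J) := by
    intro J hJ x hx y hy hxy
    rw [hdist]
    exact hJ hx hy fun h => hxy (Subtype.ext h)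
  have hins : ∀ (J' : Set ↥S) (x : ↥S), DkIndep (T.induce S) k J' →
      (∀ b ∈ J', b ≠ x → k + 1 ≤ T.dist x.1 b.1) → DkIndep (T.induce S) k (insert x J') := by
    intro J' x hJ' hx a ha b hb hab
    rcases Set.mem_insert_iff.mp ha with rfl | ha'
    · rcases Set.mem_insert_iff.mp hb with rfl | hb'
      · exact absurd rfl hab
      · rw [hdist]; exact hx b hb' (Ne.symm hab)
    · rcases Set.mem_insert_iff.mp hb with rfl | hb'
      · rw [hdist, SimpleGraph.dist_comm]; exact hx a ha' hab
      · exact hJ' ha' hb' hab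
  have hnoext : ∀ J' : Set ↥S, MaxDkIndep (T.induce S) k J' → ∀ x : ↥S,
      (∀ b ∈ J', b ≠ x → k + 1 ≤ T.dist x.1 b.1) → x ∈ J' := by
    intro J' hJ' x hx
    have h1 := hJ'.2 (insert x J') (hins J' x hJ'.1 hx) (Set.subset_insert x J')
    rw [← h1]; exact Set.mem_insert x J'
  have hpre : ∀ J : Set V, Subtype.val '' (Subtype.val ⁻¹' J : Set ↥S) = J \ {ℓ} := by
    intro J
    rw [Set.image_preimage_eq_inter_range, Subtype.range_val]
    ext x
    simp [hS]
  set A : Set (Set V) := {J | MaxDkIndep T k J ∧ ℓ ∉ J} with hA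
  set B1 : Set (Set V) :=
    {J | MaxDkIndep T k J ∧ ℓ ∈ J ∧ ¬∃ w ∉ J, ball T k w ∩ J = {ℓ}} with hB1
  set B2 : Set (Set V) :=
    {J | MaxDkIndep T k J ∧ ℓ ∈ J ∧ ∃ w ∉ J, ball T k w ∩ J = {ℓ}} with hB2
  have hmaxA : ∀ J ∈ A, MaxDkIndep (T.induce S) k (Subtype.val ⁻¹' J) := by
    intro J hJ
    obtain ⟨⟨hJi, hJm⟩, hℓJ⟩ : MaxDkIndep T k J ∧ ℓ ∉ J := hJ
    refine ⟨hdown J hJi, ?_⟩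
    intro J₂' hJ₂' hsub
    have hJsub : J ⊆ Subtype.val '' J₂' := by
      intro x hx
      have hxS : x ∈ S := fun hxe => hℓJ (hxe ▸ hx)
      exact ⟨⟨x, hxS⟩, hsub hx, rfl⟩
    have heq := hJm _ (hup _ hJ₂') hJsub
    refine Set.Subset.antisymm ?_ hsub
    intro x hx
    have hx2 : (x : V) ∈ Subtype.val '' J₂' := ⟨x, hx, rfl⟩
    rw [heq] at hx2
    exact hx2
  have hmaxB1 : ∀ J ∈ B1, MaxDkIndep (T.induce S) k (Subtype.val ⁻¹' J) := by
    intro J hJ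
    obtain ⟨⟨hJi, hJm⟩, hℓJ, hnw⟩ :
        MaxDkIndep T k J ∧ ℓ ∈ J ∧ ¬∃ w ∉ J, ball T k w ∩ J = {ℓ} := hJ
    refine ⟨hdown J hJi, ?_⟩
    intro J₂' hJ₂' hsub
    have hfar : ∀ y ∈ Subtype.val '' J₂', k + 1 ≤ T.dist ℓ y := by
      rintro y ⟨y', hy'', rfl⟩
      by_contra hcon
      have hdl : T.dist ℓ (y' : V) ≤ k := by omega
      by_cases hyJ : (y' : V) ∈ J
      · exact absurd (hJi hℓJ hyJ (Ne.symm y'.2)) (by omega)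
      · refine hnw ⟨(y' : V), hyJ, Set.Subset.antisymm ?_ ?_⟩
        · rintro j ⟨hj1, hj2⟩
          by_contra hjne
          have hjJ' : (⟨j, hjne⟩ : ↥S) ∈ J₂' := hsub (Set.mem_preimage.mpr hj2)
          have hne : (⟨j, hjne⟩ : ↥S) ≠ y' := by
            intro he
            exact hyJ ((congrArg Subtype.val he) ▸ hj2)
          have h5 := hJ₂' hjJ' hy'' hne
          rw [hdist] at h5
          have h5' : k + 1 ≤ T.dist j (y' : V) := h5
          have hj1' : T.dist (y' : V) j ≤ k := hj1
          rw [SimpleGraph.dist_comm] at hj1'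
          omega
        · intro j hj
          rw [Set.mem_singleton_iff] at hj
          rw [hj]
          exact ⟨show T.dist (y' : V) ℓ ≤ k by rwa [SimpleGraph.dist_comm], hℓJ⟩
    have hJ₂i : DkIndep T k (insert ℓ (Subtype.val '' J₂')) := by
      intro x hx y hy hxy
      rcases Set.mem_insert_iff.mp hx with rfl | hx'
      · rcases Set.mem_insert_iff.mp hy with rfl | hy'
        · exact absurd rfl hxy
        · exact hfar y hy'
      · rcases Set.mem_insert_iff.mp hy with rfl | hy'
        · rw [SimpleGraph.dist_comm]; exact hfar x hx'
        · exact hup _ hJ₂' hx' hy' hxy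
    have hJsub : J ⊆ insert ℓ (Subtype.val '' J₂') := by
      intro x hx
      by_cases hxe : x = ℓ
      · rw [hxe]; exact Set.mem_insert _ _
      · exact Set.mem_insert_of_mem _ ⟨⟨x, hxe⟩, hsub (Set.mem_preimage.mpr hx), rfl⟩
    have heq := hJm _ hJ₂i hJsub
    refine Set.Subset.antisymm ?_ hsub
    intro x hx
    have hx2 : (x : V) ∈ insert ℓ (Subtype.val '' J₂') :=
      Set.mem_insert_of_mem _ ⟨x, hx, rfl⟩
    rw [heq] at hx2
    exact hx2
  have hsurj : ∀ J' : Set ↥S, MaxDkIndep (T.induce S) k J' →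
      ∃ J ∈ A ∪ B1, Subtype.val ⁻¹' J = J' := by
    intro J' hJ'
    by_cases hdom : ∃ j ∈ Subtype.val '' J', T.dist ℓ j ≤ k
    · refine ⟨Subtype.val '' J', Or.inl ⟨⟨hup _ hJ'.1, ?_⟩, ?_⟩,
        Set.preimage_image_eq J' Subtype.val_injective⟩
      · intro J₂ hJ₂ hsub
        refine Set.Subset.antisymm ?_ hsub
        intro x hx
        by_contra hxJ
        have hxe : x ≠ ℓ := by
          rintro rfl
          obtain ⟨j, hj, hjd⟩ := hdom
          have hjne : x ≠ j := by rintro rfl; exact hxJ hj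
          exact absurd (hJ₂ hx (hsub hj) hjne) (by omega)
        have hxJ' : (⟨x, hxe⟩ : ↥S) ∈ J' := by
          apply hnoext J' hJ'
          intro b hb hbx
          apply hJ₂ hx (hsub ⟨b, hb, rfl⟩)
          intro he
          exact hbx (Subtype.ext he.symm)
        exact hxJ ⟨_, hxJ', rfl⟩
      · rintro ⟨x', hx', hval⟩
        exact x'.2 hval
    · push_neg at hdom
      have hdom' : ∀ j ∈ Subtype.val '' J', k + 1 ≤ T.dist ℓ j := by
        intro j hj
        have := hdom j hj
        omega
      have hJi : DkIndep T k (insert ℓ (Subtype.val '' J')) := by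
        intro x hx y hy hxy
        rcases Set.mem_insert_iff.mp hx with rfl | hx'
        · rcases Set.mem_insert_iff.mp hy with rfl | hy'
          · exact absurd rfl hxy
          · exact hdom' y hy'
        · rcases Set.mem_insert_iff.mp hy with rfl | hy'
          · rw [SimpleGraph.dist_comm]; exact hdom' x hx'
          · exact hup _ hJ'.1 hx' hy' hxy
      have hJm : MaxDkIndep T k (insert ℓ (Subtype.val '' J')) := by
        refine ⟨hJi, ?_⟩
        intro J₂ hJ₂ hsub
        refine Set.Subset.antisymm ?_ hsub
        intro x hx
        by_cases hxe : x = ℓ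
        · rw [hxe]; exact Set.mem_insert _ _
        · have hxJ' : (⟨x, hxe⟩ : ↥S) ∈ J' := by
            apply hnoext J' hJ'
            intro b hb hbx
            apply hJ₂ hx (hsub (Set.mem_insert_of_mem _ ⟨b, hb, rfl⟩))
            intro he
            exact hbx (Subtype.ext he.symm)
          exact Set.mem_insert_of_mem _ ⟨_, hxJ', rfl⟩
      refine ⟨insert ℓ (Subtype.val '' J'), Or.inr ⟨hJm, Set.mem_insert _ _, ?_⟩, ?_⟩
      · rintro ⟨w, hwJ, hball⟩
        have hwe : w ≠ ℓ := by
          intro he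
          exact hwJ (by rw [he]; exact Set.mem_insert _ _)
        have hwJ' : (⟨w, hwe⟩ : ↥S) ∈ J' := by
          apply hnoext J' hJ'
          intro b hb hbw
          by_contra hcon
          have hcon' : ¬ (k + 1 ≤ T.dist w (b : V)) := hcon
          have hbd : T.dist w (b : V) ≤ k := by omega
          have hbJ : (b : V) ∈ ball T k w ∩ insert ℓ (Subtype.val '' J') :=
            ⟨hbd, Set.mem_insert_of_mem _ ⟨b, hb, rfl⟩⟩
          rw [hball] at hbJ
          exact b.2 hbJ
        exact hwJ (Set.mem_insert_of_mem _ ⟨_, hwJ', rfl⟩)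
      · ext x
        simp only [Set.mem_preimage, Set.mem_insert_iff]
        constructor
        · rintro (he | ⟨x', hx', he⟩)
          · exact absurd he x.2
          · exact (Subtype.ext he) ▸ hx'
        · intro hx
          exact Or.inr ⟨x, hx, rfl⟩
  have hinj : Set.InjOn (fun J : Set V => (Subtype.val ⁻¹' J : Set ↥S)) (A ∪ B1) := by
    intro J1 h1 J2 h2 he
    simp only at he
    have e2 : J1 \ {ℓ} = J2 \ {ℓ} := by rw [← hpre, ← hpre, he]
    rcases h1 with h1 | h1 <;> rcases h2 with h2 | h2
    · obtain ⟨hm1, hl1⟩ : MaxDkIndep T k J1 ∧ ℓ ∉ J1 := h1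
      obtain ⟨hm2, hl2⟩ : MaxDkIndep T k J2 ∧ ℓ ∉ J2 := h2
      rwa [Set.diff_singleton_eq_self hl1, Set.diff_singleton_eq_self hl2] at e2
    · obtain ⟨hm1, hl1⟩ : MaxDkIndep T k J1 ∧ ℓ ∉ J1 := h1
      obtain ⟨hm2, hl2, _⟩ :
          MaxDkIndep T k J2 ∧ ℓ ∈ J2 ∧ ¬∃ w ∉ J2, ball T k w ∩ J2 = {ℓ} := h2
      exfalso
      have hJ1 : J1 = J2 \ {ℓ} := by rw [← e2, Set.diff_singleton_eq_self hl1]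
      have hsub : J1 ⊆ J2 := by rw [hJ1]; exact Set.diff_subset
      have := hm1.2 J2 hm2.1 hsub
      exact hl1 (this ▸ hl2)
    · obtain ⟨hm2, hl2⟩ : MaxDkIndep T k J2 ∧ ℓ ∉ J2 := h2
      obtain ⟨hm1, hl1, _⟩ :
          MaxDkIndep T k J1 ∧ ℓ ∈ J1 ∧ ¬∃ w ∉ J1, ball T k w ∩ J1 = {ℓ} := h1
      exfalso
      have hJ2' : J2 = J1 \ {ℓ} := by rw [e2, Set.diff_singleton_eq_self hl2]
      have hsub : J2 ⊆ J1 := by rw [hJ2']; exact Set.diff_subset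
      have := hm2.2 J1 hm1.1 hsub
      exact hl2 (this ▸ hl1)
    · obtain ⟨hm1, hl1, _⟩ :
          MaxDkIndep T k J1 ∧ ℓ ∈ J1 ∧ ¬∃ w ∉ J1, ball T k w ∩ J1 = {ℓ} := h1
      obtain ⟨hm2, hl2, _⟩ :
          MaxDkIndep T k J2 ∧ ℓ ∈ J2 ∧ ¬∃ w ∉ J2, ball T k w ∩ J2 = {ℓ} := h2
      ext x
      by_cases hxe : x = ℓ
      · subst hxe; simp [hl1, hl2]
      · constructor
        · intro hx
          have hx' : x ∈ J1 \ {ℓ} := ⟨hx, hxe⟩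
          rw [e2] at hx'
          exact hx'.1
        · intro hx
          have hx' : x ∈ J2 \ {ℓ} := ⟨hx, hxe⟩
          rw [← e2] at hx'
          exact hx'.1
  have hpart : {J : Set V | MaxDkIndep T k J} = (A ∪ B1) ∪ B2 := by
    ext J
    simp only [hA, hB1, hB2, Set.mem_setOf_eq, Set.mem_union]
    constructor
    · intro h
      by_cases h1 : ℓ ∈ J
      · by_cases h2 : ∃ w ∉ J, ball T k w ∩ J = {ℓ}
        · exact Or.inr ⟨h, h1, h2⟩
        · exact Or.inl (Or.inr ⟨h, h1, h2⟩)
      · exact Or.inl (Or.inl ⟨h, h1⟩)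
    · rintro ((h | h) | h)
      exacts [h.1, h.1, h.1]
  have hdisj1 : Disjoint (A ∪ B1) B2 := by
    rw [Set.disjoint_left]
    rintro J hJ hJ2
    obtain ⟨_, hl2, hw2⟩ :
        MaxDkIndep T k J ∧ ℓ ∈ J ∧ ∃ w ∉ J, ball T k w ∩ J = {ℓ} := hJ2
    rcases hJ with h | h
    · exact (show MaxDkIndep T k J ∧ ℓ ∉ J from h).2 hl2
    · exact (show MaxDkIndep T k J ∧ ℓ ∈ J ∧ ¬∃ w ∉ J, ball T k w ∩ J = {ℓ} from h).2.2 hw2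
  have himgeq : (fun J : Set V => (Subtype.val ⁻¹' J : Set ↥S)) '' (A ∪ B1) =
      {J' : Set ↥S | MaxDkIndep (T.induce S) k J'} := by
    apply Set.Subset.antisymm
    · rintro J' ⟨J, hJ, rfl⟩
      rcases hJ with hJ | hJ
      · exact hmaxA J hJ
      · exact hmaxB1 J hJ
    · intro J' hJ'
      obtain ⟨J, hJ, hfe⟩ := hsurj J' hJ'
      exact ⟨J, hJ, hfe⟩
  have hcard1 : mdi (T.induce S) k = (A ∪ B1).ncard := by
    show {J' : Set ↥S | MaxDkIndep (T.induce S) k J'}.ncard = _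
    rw [← himgeq]
    exact Set.ncard_image_of_injOn hinj
  have hcard2 : mdi T k = (A ∪ B1).ncard + B2.ncard := by
    show {J : Set V | MaxDkIndep T k J}.ncard = _
    rw [hpart]
    exact Set.ncard_union_eq hdisj1 (Set.toFinite _) (Set.toFinite _)
  have hstar : mdiStar T k ℓ = B2.ncard := by rw [hB2]; rfl
  rw [hcard2, hcard1, hstar]
end

section
/- Let k ≥ 2 and let T be a tree with a leaf u such that no leaf of T belongs to N_{k+1}[u] ∖ {u}. Then mdi_k(T ∖ u) < mdi_k(T), where T ∖ u is the tree obtained from T by deleting u. -/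
/-
Removing the leaf `u` changes no distance between the remaining vertices. Hence every `k`-MDIS
`J` of `T - u` extends to a `k`-MDIS of `T` whose trace on `T - u` is `J` again: taking traces maps
the `k`-MDISs of `T` onto a family containing all `k`-MDISs of `T - u`, and it suffices to find a
`k`-MDIS of `T` whose trace is not maximal in `T - u`. Any `k`-MDIS all of whose vertices other
than `u` lie at distance at least `k + 2` from `u` will do, since the neighbour of `u` can be added
to its trace. To build one, take a maximal independent set `M` on the sphere of radius `k + 2`
around `u` and extend it within the vertices at distance at least `k + 2`. A vertex `v` at
distance `k + 1` is not a leaf, so it has a child `z` on that sphere, and `z` either lies in `M`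
or is within distance `k` of some `m ∈ M`. As `m` lies no deeper than `z`, the path from `z` to
`m` runs through `v`, so `v` is within distance `k` of `m` too; together with `u` this makes the
set maximal.
-/

def FarFrom {V : Type*} (G : SimpleGraph V) (k : ℕ) (J : Set V) (v : V) : Prop :=
  ∀ ⦃j⦄, j ∈ J → v ≠ j → k + 1 ≤ G.dist v j

namespace SimpleGraph

variable {V : Type*} {G : SimpleGraph V}

lemma Reachable.exists_adj_dist_add_one {a b : V} (hr : G.Reachable a b) (hab : a ≠ b) :
    ∃ c, G.Adj a c ∧ G.dist c b + 1 = G.dist a b := by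
  obtain ⟨p, -, hp⟩ := hr.exists_path_of_dist
  have hnil : ¬ p.Nil := fun h => hab h.eq
  refine ⟨p.snd, p.adj_snd hnil, le_antisymm ?_ ?_⟩
  · have := dist_le p.tail
    rw [← hp, ← p.length_tail_add_one hnil]
    omega
  · have := (p.adj_snd hnil).reachable.dist_triangle_left b
    have := dist_eq_one_iff_adj.mpr (p.adj_snd hnil)
    omega

lemma Walk.IsPath.notMem_support_of_neighborSet_eq {u n a b : V}
    (hn : G.neighborSet u = {n}) {p : G.Walk a b} (hp : p.IsPath) (ha : a ≠ u) (hb : b ≠ u) :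
    u ∉ p.support := by
  intro hu
  obtain ⟨q, r, rfl⟩ := Walk.mem_support_iff_exists_append.mp hu
  have hq : ¬ q.Nil := fun h => ha h.eq
  have hr : ¬ r.Nil := fun h => hb h.eq.symm
  have hqn : q.penultimate ∈ G.neighborSet u := (q.adj_penultimate hq).symm
  have hrn : r.snd ∈ G.neighborSet u := r.adj_snd hr
  rw [hn] at hqn hrn
  -- a path through the leaf `u` would visit its only neighbour `n` both before and after `u`
  exact hp.ne_of_mem_support_of_append (r.adj_snd hr).ne' (q.getVert_mem_support _)
    (r.getVert_mem_support 1) (hqn.trans hrn.symm)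

lemma Connected.dist_induce_ne_of_neighborSet_eq (hG : G.Connected) {u n : V}
    (hn : G.neighborSet u = {n}) (a b : {v | v ≠ u}) :
    G.dist a b = (G.induce {v | v ≠ u}).dist a b := by
  obtain ⟨p, hp, hpl⟩ := hG.exists_path_of_dist a b
  have hs : ∀ x ∈ p.support, x ∈ {v | v ≠ u} := fun x hx hxu =>
    hp.notMem_support_of_neighborSet_eq hn a.2 b.2 (hxu ▸ hx)
  let p' := p.induce {v | v ≠ u} hs
  have hp' : p'.length = p.length :=
    (Walk.length_map _ p').symm.trans (congrArg Walk.length (Walk.map_induce p hs))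
  apply le_antisymm
  · obtain ⟨q, hq⟩ := (show (G.induce {v | v ≠ u}).Reachable a b from p'.reachable)
      |>.exists_walk_length_eq_dist
    rw [← hq, ← Walk.length_map (Embedding.induce _).toHom]
    exact dist_le _
  · exact (dist_le p').trans_eq (hp'.trans hpl)

variable {u : V}

lemma IsTree.eq_of_adj_of_dist_add_one (hG : G.IsTree) {a p₁ p₂ : V}
    (h₁ : G.Adj p₁ a) (h₂ : G.Adj p₂ a)
    (hd₁ : G.dist u p₁ + 1 = G.dist u a) (hd₂ : G.dist u p₂ + 1 = G.dist u a) : p₁ = p₂ := by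
  classical
  obtain ⟨q₁, hq₁, hl₁⟩ := hG.connected.exists_path_of_dist u p₁
  obtain ⟨q₂, hq₂, hl₂⟩ := hG.connected.exists_path_of_dist u p₂
  have ha₁ : a ∉ q₁.support := fun h => by
    have := (dist_le (q₁.takeUntil a h)).trans (q₁.length_takeUntil_le_length h)
    omega
  have ha₂ : a ∉ q₂.support := fun h => by
    have := (dist_le (q₂.takeUntil a h)).trans (q₂.length_takeUntil_le_length h)
    omega
  have := congrArg (fun p : G.Path u a => p.1.penultimate) <|
    (hG.isAcyclic.subsingleton_path u a).elim ⟨_, hq₁.concat ha₁ h₁⟩ ⟨_, hq₂.concat ha₂ h₂⟩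
  simpa [Walk.penultimate_concat] using this

lemma IsTree.exists_adj_dist_add_one_of_ne (hG : G.IsTree) {a : V} (ha : a ≠ u) :
    ∃ p, G.Adj p a ∧ G.dist u p + 1 = G.dist u a := by
  obtain ⟨p, hap, hp⟩ := (hG.connected a u).exists_adj_dist_add_one ha
  exact ⟨p, hap.symm, by rwa [dist_comm (u := u), dist_comm (u := u)]⟩

lemma IsTree.exists_child_of_not_isLeaf (hG : G.IsTree) {a : V} (ha : a ≠ u)
    (hleaf : ¬ IsLeaf G a) : ∃ z, G.Adj a z ∧ G.dist u z = G.dist u a + 1 := by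
  obtain ⟨p, hpa, hp⟩ := hG.exists_adj_dist_add_one_of_ne ha
  obtain ⟨z, hz, hzp⟩ : ∃ z ∈ G.neighborSet a, z ≠ p := by
    by_contra! h
    have : G.neighborSet a = {p} := Set.eq_singleton_iff_unique_mem.mpr ⟨hpa.symm, h⟩
    exact hleaf (by rw [IsLeaf, this, Set.ncard_singleton])
  refine ⟨z, hz, (hG.dist_eq_dist_add_one_of_adj u hz).resolve_left fun hza => ?_⟩
  exact hzp (hG.eq_of_adj_of_dist_add_one hz.symm hpa hza.symm hp)

/-- Seen from the root `u`, the path from `z` to a vertex `m` that lies no deeper than `z`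
leaves `z` through its parent `v`. -/
lemma IsTree.dist_parent_add_one (hG : G.IsTree) {v z m : V} (hvz : G.Adj v z)
    (hv : G.dist u v + 1 = G.dist u z) (hzm : z ≠ m) (hm : G.dist u m ≤ G.dist u z) :
    G.dist v m + 1 = G.dist z m := by
  induction hd : G.dist z m using Nat.strong_induction_on generalizing v z with
  | _ d ih =>
    obtain ⟨c, hzc, hc⟩ := (hG.connected z m).exists_adj_dist_add_one hzm
    rcases hG.dist_eq_dist_add_one_of_adj u hzc with hcz | hcz
    · rw [← hG.eq_of_adj_of_dist_add_one hzc.symm hvz hcz.symm hv, ← hd, hc]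
    · have hcm : c ≠ m := by rintro rfl; omega
      have := ih _ (by omega) hzc hcz.symm hcm (by omega) rfl
      omega

end SimpleGraph

section DistanceIndependence

variable {V V' : Type*} {G : SimpleGraph V} {G' : SimpleGraph V'} {k : ℕ} {J I : Set V}

lemma FarFrom.anti {v : V} (hv : FarFrom G k J v) (hIJ : I ⊆ J) : FarFrom G k I v :=
  fun _ hj => hv (hIJ hj)

lemma DkIndep.insert {v : V} (hJ : DkIndep G k J) (hv : FarFrom G k J v) :
    DkIndep G k (insert v J) := by
  rintro a (rfl | ha) b (rfl | hb) hab
  · exact absurd rfl hab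
  · exact hv hb hab
  · rw [SimpleGraph.dist_comm]
    exact hv ha hab.symm
  · exact hJ ha hb hab

lemma maxDkIndep_iff : MaxDkIndep G k J ↔ DkIndep G k J ∧ ∀ v, FarFrom G k J v → v ∈ J := by
  refine ⟨fun ⟨hJ, hmax⟩ => ⟨hJ, fun v hv => ?_⟩, fun ⟨hJ, hmax⟩ => ⟨hJ, fun J' hJ' hJJ' => ?_⟩⟩
  · rw [← hmax _ (hJ.insert hv) (Set.subset_insert v J)]
    exact Set.mem_insert v J
  · exact Set.Subset.antisymm (fun v hv => hmax v fun j hj => hJ' hv (hJJ' hj)) hJJ'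

lemma DkIndep.exists_maximal_within [Finite V] {W : Set V} (hJ : DkIndep G k J) (hJW : J ⊆ W) :
    ∃ I, J ⊆ I ∧ I ⊆ W ∧ DkIndep G k I ∧ ∀ v ∈ W, FarFrom G k I v → v ∈ I := by
  obtain ⟨I, hJI, ⟨hIW, hI⟩, hmax⟩ :=
    Finite.exists_le_maximal (p := fun I => I ⊆ W ∧ DkIndep G k I) ⟨hJW, hJ⟩
  refine ⟨I, hJI, hIW, hI, fun v hvW hv => ?_⟩
  exact hmax ⟨Set.insert_subset hvW hIW, hI.insert hv⟩ (Set.subset_insert v I)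
    (Set.mem_insert v I)

variable {f : V' → V}

lemma DkIndep.image (hf : ∀ a b, G.dist (f a) (f b) = G'.dist a b) {J : Set V'}
    (hJ : DkIndep G' k J) : DkIndep G k (f '' J) := by
  rintro _ ⟨a, ha, rfl⟩ _ ⟨b, hb, rfl⟩ hab
  rw [hf]
  exact hJ ha hb (ne_of_apply_ne f hab)

lemma DkIndep.preimage (hf : Function.Injective f) (hd : ∀ a b, G.dist (f a) (f b) = G'.dist a b)
    (hI : DkIndep G k I) : DkIndep G' k (f ⁻¹' I) :=
  fun a ha b hb hab => hd a b ▸ hI ha hb (hf.ne hab)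

lemma MaxDkIndep.exists_preimage_eq [Finite V] (hf : Function.Injective f)
    (hd : ∀ a b, G.dist (f a) (f b) = G'.dist a b) {J : Set V'} (hJ : MaxDkIndep G' k J) :
    ∃ I, MaxDkIndep G k I ∧ f ⁻¹' I = J := by
  obtain ⟨I, hJI, -, hI, hmax⟩ := (hJ.1.image hd).exists_maximal_within (Set.subset_univ _)
  exact ⟨I, maxDkIndep_iff.mpr ⟨hI, fun v => hmax v trivial⟩,
    hJ.2 _ (hI.preimage hf hd) (Set.image_subset_iff.mp hJI)⟩

end DistanceIndependence

namespace SimpleGraph.IsTree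

variable {V : Type*} {T : SimpleGraph V} {k : ℕ} {u : V}

lemma not_farFrom_of_sphere (hk : 1 ≤ k) (hT : T.IsTree) {M : Set V}
    (hMS : M ⊆ {z | T.dist u z = k + 2})
    (hM : ∀ z, T.dist u z = k + 2 → FarFrom T k M z → z ∈ M)
    {v : V} (hv : T.dist u v = k + 1) (hleaf : ¬ IsLeaf T v) : ¬ FarFrom T k M v := by
  intro hfar
  have hvu : v ≠ u := by rintro rfl; simp at hv
  obtain ⟨z, hvz, hz⟩ := hT.exists_child_of_not_isLeaf hvu hleaf
  have hzM : z ∈ M := hM z (by omega) fun m hm hzm => by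
    have hmd : T.dist u m = k + 2 := hMS hm
    have hvm : v ≠ m := by rintro rfl; omega
    have := hT.dist_parent_add_one (u := u) hvz (by omega) hzm (by omega)
    have := hfar hm hvm
    omega
  have := hfar hzM hvz.ne
  rw [dist_eq_one_iff_adj.mpr hvz] at this
  omega

lemma exists_maxDkIndep_far_from_root [Finite V] (hk : 1 ≤ k)
    (hT : T.IsTree) (hleaf : ∀ v, T.dist u v = k + 1 → ¬ IsLeaf T v) :
    ∃ J, MaxDkIndep T k J ∧ ∀ j ∈ J, j ≠ u → k + 2 ≤ T.dist u j := by
  have hempty : DkIndep T k ∅ := fun _ h => h.elim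
  obtain ⟨M, -, hMS, hMi, hM⟩ :=
    hempty.exists_maximal_within (Set.empty_subset {z | T.dist u z = k + 2})
  obtain ⟨M', hMM', hM'W, hM'i, hM'⟩ :=
    hMi.exists_maximal_within (W := {z | k + 2 ≤ T.dist u z}) fun z hz => (hMS hz).ge
  have hfar : FarFrom T k M' u := fun j hj _ => by have : k + 2 ≤ T.dist u j := hM'W hj; omega
  refine ⟨insert u M', maxDkIndep_iff.mpr ⟨hM'i.insert hfar, fun v hv => ?_⟩,
    fun j hj hju => hM'W (hj.resolve_left hju)⟩
  rcases eq_or_ne v u with rfl | hvu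
  · exact Set.mem_insert v M'
  have hvd : k + 1 ≤ T.dist u v := by
    rw [dist_comm]
    exact hv (Set.mem_insert u M') hvu
  have hv' : FarFrom T k M' v := hv.anti (Set.subset_insert u M')
  rcases hvd.eq_or_lt with hvd | hvd
  · exact (hT.not_farFrom_of_sphere hk hMS hM hvd.symm (hleaf v hvd.symm) (hv'.anti hMM')).elim
  · exact Set.mem_insert_of_mem u (hM' v hvd hv')

end SimpleGraph.IsTree

/-- If `u` is a leaf of the tree `T` and no leaf of `T` lies in
`N_{k+1}[u] ∖ {u}` (with `k ≥ 2`), then `mdi_k(T ∖ u) < mdi_k(T)`. -/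
theorem stmt_4 {V : Type} [Fintype V] (k : ℕ) (hk : 2 ≤ k) (T : SimpleGraph V)
    (hT : T.IsTree) (u : V) (hu : IsLeaf T u)
    (h : ∀ v, IsLeaf T v → v ∈ ball T (k + 1) u \ {u} → False) :
    mdi (T.induce {v | v ≠ u}) k < mdi T k := by
  obtain ⟨n, hn⟩ := Set.ncard_eq_one.mp hu
  have hadj : T.Adj u n := show n ∈ T.neighborSet u from hn ▸ Set.mem_singleton n
  have hun : T.dist u n = 1 := SimpleGraph.dist_eq_one_iff_adj.mpr hadj
  have hdist := hT.connected.dist_induce_ne_of_neighborSet_eq hn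
  obtain ⟨J, hJ, hJfar⟩ := hT.exists_maxDkIndep_far_from_root (k := k) (u := u) (by omega)
    fun v hv hleaf => h v hleaf ⟨(show T.dist u v ≤ k + 1 by omega), by rintro rfl; simp at hv⟩
  set trace : Set V → Set {v | v ≠ u} := (Subtype.val ⁻¹' ·)
  have hsub : {J' | MaxDkIndep (T.induce {v | v ≠ u}) k J'} ⊆ trace '' {I | MaxDkIndep T k I} :=
    fun J' hJ' => hJ'.exists_preimage_eq Subtype.val_injective hdist
  have hJtrace : ¬ MaxDkIndep (T.induce {v | v ≠ u}) k (trace J) := fun hmax => by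
    have hnJ : ⟨n, hadj.ne'⟩ ∈ trace J := (maxDkIndep_iff.mp hmax).2 _ fun j hj _ => by
      have := hJfar j hj j.2
      have := hT.connected.dist_triangle (u := u) (v := n) (w := j)
      rw [← hdist]
      change k + 1 ≤ T.dist n j
      omega
    have := hJfar n hnJ hadj.ne'
    omega
  calc mdi (T.induce {v | v ≠ u}) k
      < (trace '' {I | MaxDkIndep T k I}).ncard :=
        Set.ncard_lt_ncard ((Set.ssubset_iff_of_subset hsub).mpr ⟨_, ⟨J, hJ, rfl⟩, hJtrace⟩)
          (Set.toFinite _)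
    _ ≤ mdi T k := Set.ncard_image_le (Set.toFinite _)
end

section
/- Let k ≥ 2 and let T be a tree with a k-twin u that is a leaf. Then mdi_k(T ∖ u) ≤ mdi_k(T) − 1, where T ∖ u is the tree obtained from T by deleting u. Moreover, if T has a unique k-MDIS containing u, then mdi_k(T ∖ u) = mdi_k(T) − 1. -/
/-! Deleting a leaf `u` changes no distance between the remaining vertices, so the maximal
distance-`k` independent sets of `T - u` are exactly those of `T` avoiding `u`, pulled back.
The one point needing the twin `t` of `u`: a maximal set of `T - u` has a vertex within
distance `k` of `t`, hence of `u`, so it stays maximal in `T`. Thus `mdi_k(T)` is `mdi_k(T - u)`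
plus the number of maximal sets through `u`, which is positive (extend `{u}`). -/

open SimpleGraph

variable {V : Type*} {G : SimpleGraph V} {k : ℕ}

lemma IsLeaf.eq_of_adj {u a b : V} (hu : IsLeaf G u) (ha : G.Adj u a) (hb : G.Adj u b) :
    a = b := by
  obtain ⟨c, hc⟩ := Set.ncard_eq_one.mp hu
  have ha' : a ∈ G.neighborSet u := ha
  have hb' : b ∈ G.neighborSet u := hb
  rw [hc] at ha' hb'
  exact ha'.trans hb'.symm

-- A path through a leaf would enter and leave it by the same edge.
lemma SimpleGraph.Walk.IsPath.notMem_support_of_isLeaf {u x y : V} {p : G.Walk x y}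
    (hp : p.IsPath) (hu : IsLeaf G u) (hx : x ≠ u) (hy : y ≠ u) : u ∉ p.support := by
  induction p with
  | nil => simpa using hx.symm
  | @cons x b y h p ih =>
    obtain ⟨hp, hxp⟩ := (Walk.cons_isPath_iff h p).mp hp
    by_cases hb : b = u
    · subst hb
      cases p with
      | nil => exact absurd rfl hy
      | cons h' q =>
        have hxc := hu.eq_of_adj h.symm h'
        exact absurd (by simp [hxc]) hxp
    · simp [hx.symm, ih hp hb hy]

lemma edist_induce_ne_of_isLeaf {u : V} (hu : IsLeaf G u) (x y : {v | v ≠ u}) :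
    (G.induce {v | v ≠ u}).edist x y = G.edist x y := by
  classical
  refine le_antisymm ?_ ?_
  · rcases eq_or_ne (G.edist x y) ⊤ with h | h
    · exact h ▸ le_top
    obtain ⟨p, hp⟩ := (reachable_of_edist_ne_top h).exists_walk_length_eq_edist
    have hsupp : ∀ w ∈ p.bypass.support, w ∈ {v | v ≠ u} := fun w hw hwu =>
      p.bypass_isPath.notMem_support_of_isLeaf hu x.2 y.2 (hwu ▸ hw)
    calc (G.induce {v | v ≠ u}).edist x y ≤ (p.bypass.induce _ hsupp).length := edist_le _
      _ = p.bypass.length := by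
        rw [← Walk.length_map (Embedding.induce _).toHom, Walk.map_induce]
        rfl
      _ ≤ p.length := by exact_mod_cast p.length_bypass_le_length
      _ = G.edist x y := hp
  · rcases eq_or_ne ((G.induce {v | v ≠ u}).edist x y) ⊤ with h | h
    · exact h ▸ le_top
    obtain ⟨q, hq⟩ := (reachable_of_edist_ne_top h).exists_walk_length_eq_edist
    calc G.edist x y ≤ (q.map (Embedding.induce _).toHom).length := edist_le _
      _ = _ := by rw [Walk.length_map, hq]

lemma dist_induce_ne_of_isLeaf {u : V} (hu : IsLeaf G u) (x y : {v | v ≠ u}) :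
    (G.induce {v | v ≠ u}).dist x y = G.dist x y := by
  rw [SimpleGraph.dist, SimpleGraph.dist, edist_induce_ne_of_isLeaf hu]

lemma maxDkIndep_iff_maximal {J : Set V} : MaxDkIndep G k J ↔ Maximal (DkIndep G k) J :=
  and_congr_right fun _ =>
    ⟨fun h _ hJ' hsub => (h _ hJ' hsub).le, fun h _ hJ' hsub => (h hJ' hsub).antisymm hsub⟩

lemma exists_maxDkIndep_mem [Finite V] (u : V) : ∃ J, MaxDkIndep G k J ∧ u ∈ J := by
  have hsingle : DkIndep G k {u} := by
    rintro a rfl b rfl hab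
    exact absurd rfl hab
  obtain ⟨J, hsub, hJ⟩ := Finite.exists_le_maximal hsingle
  exact ⟨J, maxDkIndep_iff_maximal.2 hJ, hsub rfl⟩

lemma MaxDkIndep.exists_mem_dist_le {J : Set V} (hJ : MaxDkIndep G k J) (w : V) :
    ∃ j ∈ J, G.dist w j ≤ k := by
  by_contra! hfar
  have hins : DkIndep G k (insert w J) := by
    rintro a (rfl | ha) b (rfl | hb) hab
    · exact absurd rfl hab
    · exact hfar b hb
    · exact G.dist_comm ▸ hfar a ha
    · exact hJ.1 ha hb hab
  have hw : w ∈ J := hJ.2 _ hins (Set.subset_insert _ _) ▸ Set.mem_insert w J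
  simpa using hfar w hw

section Induce

variable {s : Set V}

lemma dkIndep_induce_iff (hdist : ∀ x y : s, (G.induce s).dist x y = G.dist x y) (J : Set s) :
    DkIndep (G.induce s) k J ↔ DkIndep G k (Subtype.val '' J) := by
  constructor
  · rintro h _ ⟨a, ha, rfl⟩ _ ⟨b, hb, rfl⟩ hab
    exact hdist a b ▸ h ha hb (ne_of_apply_ne _ hab)
  · intro h a ha b hb hab
    exact (hdist a b).symm ▸ h ⟨a, ha, rfl⟩ ⟨b, hb, rfl⟩ (Subtype.val_injective.ne hab)

lemma MaxDkIndep.image_val (hdist : ∀ x y : s, (G.induce s).dist x y = G.dist x y) {J : Set s}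
    (hJ : MaxDkIndep (G.induce s) k J) (hdom : ∀ w ∉ s, ∃ j ∈ J, G.dist w j ≤ k) :
    MaxDkIndep G k (Subtype.val '' J) := by
  refine ⟨(dkIndep_induce_iff hdist J).1 hJ.1, fun J' hJ' hsub => ?_⟩
  have hJ's : J' ⊆ s := fun w hw => by
    by_contra hws
    obtain ⟨j, hj, hwj⟩ := hdom w hws
    have hne : w ≠ j := fun h => hws (h ▸ j.2)
    have := hJ' hw (hsub ⟨j, hj, rfl⟩) hne
    omega
  have him : Subtype.val '' (Subtype.val ⁻¹' J' : Set s) = J' :=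
    Set.image_preimage_eq_of_subset (hJ's.trans Subtype.range_coe.superset)
  have hpre := hJ.2 _ ((dkIndep_induce_iff hdist _).2 (by rwa [him])) (Set.image_subset_iff.1 hsub)
  rw [← him, hpre]

lemma MaxDkIndep.preimage_val (hdist : ∀ x y : s, (G.induce s).dist x y = G.dist x y) {J : Set V}
    (hJ : MaxDkIndep G k J) (hJs : J ⊆ s) :
    MaxDkIndep (G.induce s) k (Subtype.val ⁻¹' J) := by
  have him : Subtype.val '' (Subtype.val ⁻¹' J : Set s) = J :=
    Set.image_preimage_eq_of_subset (hJs.trans Subtype.range_coe.superset)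
  refine ⟨(dkIndep_induce_iff hdist _).2 (by rw [him]; exact hJ.1), fun K hK hsub => ?_⟩
  have hKJ := hJ.2 _ ((dkIndep_induce_iff hdist K).1 hK) (by rw [← him]; exact Set.image_mono hsub)
  rw [← hKJ, Set.preimage_image_eq K Subtype.val_injective]

lemma mdi_induce_eq_ncard (hdist : ∀ x y : s, (G.induce s).dist x y = G.dist x y)
    (hdom : ∀ J, MaxDkIndep (G.induce s) k J → ∀ w ∉ s, ∃ j ∈ J, G.dist w j ≤ k) :
    mdi (G.induce s) k = {J | MaxDkIndep G k J ∧ J ⊆ s}.ncard := by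
  rw [mdi, ← Set.ncard_image_of_injective _ (Set.image_injective.2 Subtype.val_injective)]
  congr 1
  ext J
  constructor
  · rintro ⟨J', hJ', rfl⟩
    exact ⟨hJ'.image_val hdist (hdom J' hJ'), Subtype.coe_image_subset _ _⟩
  · rintro ⟨hJ, hJs⟩
    exact ⟨_, hJ.preimage_val hdist hJs,
      Set.image_preimage_eq_of_subset (hJs.trans Subtype.range_coe.superset)⟩

end Induce

lemma mdi_eq_mdi_induce_ne_add [Finite V] {u : V} (hu : IsLeaf G u) (htwin : KTwin G k u) :
    mdi G k = mdi (G.induce {v | v ≠ u}) k + {J | MaxDkIndep G k J ∧ u ∈ J}.ncard := by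
  obtain ⟨t, htu, hball⟩ := htwin
  have hdom : ∀ J, MaxDkIndep (G.induce {v | v ≠ u}) k J →
      ∀ w ∉ {v | v ≠ u}, ∃ j ∈ J, G.dist w j ≤ k := by
    intro J hJ w hw
    obtain rfl : w = u := not_not.1 hw
    obtain ⟨j, hj, htj⟩ := hJ.exists_mem_dist_le ⟨t, htu⟩
    rw [dist_induce_ne_of_isLeaf hu] at htj
    have hj_near : (j : V) ∈ ball G k w := hball ▸ htj
    exact ⟨j, hj, hj_near⟩
  rw [mdi_induce_eq_ncard (dist_induce_ne_of_isLeaf hu) hdom, mdi, add_comm,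
    ← Set.ncard_inter_add_ncard_sdiff_eq_ncard _ {J | u ∈ J}]
  congr 2
  ext J
  exact and_congr_right fun _ => (Set.subset_compl_singleton_iff (a := u) (s := J)).symm

theorem stmt_6_general {V : Type} [Fintype V] (k : ℕ) (T : SimpleGraph V)
    (u : V) (htwin : KTwin T k u) (hu : IsLeaf T u) :
    mdi (T.induce {v | v ≠ u}) k ≤ mdi T k - 1 ∧
    ((∃! J : Set V, MaxDkIndep T k J ∧ u ∈ J) →
      mdi (T.induce {v | v ≠ u}) k = mdi T k - 1) := by
  have hsplit := mdi_eq_mdi_induce_ne_add hu htwin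
  have hpos : 0 < {J | MaxDkIndep T k J ∧ u ∈ J}.ncard :=
    (Set.ncard_pos (Set.toFinite _)).2 (exists_maxDkIndep_mem u)
  refine ⟨by omega, fun ⟨J, hJ, hJuniq⟩ => ?_⟩
  have hone : {J | MaxDkIndep T k J ∧ u ∈ J}.ncard = 1 :=
    Set.ncard_eq_one.2 ⟨J, Set.eq_singleton_iff_unique_mem.2 ⟨hJ, hJuniq⟩⟩
  omega

/-- If `u` is a leaf of the tree `T` that is a `k`-twin (`k ≥ 2`), then
`mdi_k(T ∖ u) ≤ mdi_k(T) − 1`; moreover if `T` has a unique `k`-MDIS containing `u`,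
then `mdi_k(T ∖ u) = mdi_k(T) − 1`. -/
theorem stmt_6 {V : Type} [Fintype V] (k : ℕ) (hk : 2 ≤ k) (T : SimpleGraph V)
    (hT : T.IsTree) (u : V) (htwin : KTwin T k u) (hu : IsLeaf T u) :
    mdi (T.induce {v | v ≠ u}) k ≤ mdi T k - 1 ∧
    ((∃! J : Set V, MaxDkIndep T k J ∧ u ∈ J) →
      mdi (T.induce {v | v ≠ u}) k = mdi T k - 1) :=
  stmt_6_general k T u htwin hu
end

section
/- For every k ≥ 2, if a tree T has diameter at most k + 3 − (k mod 2) and has a branching vertex that is not a central vertex, then T has a leaf that is a k-twin. -/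
/-!
Let `z` be a vertex with `ecc z < ecc w`, and `ℓ` a vertex farthest from `w`. Then `z` lies in the
branch of `T - w` containing `ℓ`, and comparing `d(z, y) ≤ ecc z < d(w, ℓ)` with
`d(ℓ, y) ≤ diam T` shows that every vertex `y` of any other branch has `2 d(w, y) + 2 ≤ diam T`,
hence `2 d(w, y) ≤ k`. As `w` has degree at least three, there are two such branches. The deepest
vertex `ℓ'` of the shallower one is a leaf, and it has the same `k`-ball as the vertex `u` at the
same depth in the other: both balls contain the two branches entirely, and outside them
`d(ℓ', y) = d(w, ℓ') + d(w, y) = d(u, y)`.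
-/

namespace SimpleGraph

variable {V : Type*} {G : SimpleGraph V} {u v w b c : V}

/-- The vertices `v` admitting a geodesic from `w` that starts with the edge `wb`; for a neighbour
`b` of `w` in a tree, this is the component of `T - w` containing `b`. -/
def branch (G : SimpleGraph V) (w b : V) : Set V :=
  {v | G.dist b v + 1 = G.dist w v}

lemma mem_branch : v ∈ G.branch w b ↔ G.dist b v + 1 = G.dist w v := Iff.rfl

lemma Adj.mem_branch (h : G.Adj w b) : b ∈ G.branch w b := by
  rw [SimpleGraph.mem_branch, dist_self, dist_eq_one_iff_adj.mpr h]

lemma reachable_of_mem_branch (h : v ∈ G.branch w b) : G.Reachable w v :=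
  Reachable.of_dist_ne_zero (by rw [mem_branch] at h; omega)

lemma ne_of_mem_branch (h : v ∈ G.branch w b) : w ≠ v := by
  rintro rfl
  rw [mem_branch, dist_self] at h
  omega

lemma Reachable.exists_adj_mem_branch (h : G.Reachable w v) (hwv : w ≠ v) :
    ∃ b, G.Adj w b ∧ v ∈ G.branch w b := by
  obtain ⟨p, hp⟩ := h.exists_walk_length_eq_dist
  cases p with
  | nil => exact absurd rfl hwv
  | cons hadj q =>
    refine ⟨_, hadj, le_antisymm ?_ ?_⟩
    · have := dist_le q
      rw [Walk.length_cons] at hp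
      omega
    · have := hadj.reachable.dist_triangle_left v
      rw [dist_eq_one_iff_adj.mpr hadj] at this
      omega

lemma IsAcyclic.length_eq_dist_of_isPath (hG : G.IsAcyclic) {p : G.Walk u v} (hp : p.IsPath) :
    p.length = G.dist u v := by
  obtain ⟨q, hq, hql⟩ := p.reachable.exists_path_of_dist
  obtain rfl : p = q := congrArg Subtype.val ((hG.subsingleton_path u v).elim ⟨p, hp⟩ ⟨q, hq⟩)
  exact hql

lemma exists_isPath_cons_of_mem_branch (hb : G.Adj w b) (hv : v ∈ G.branch w b) :
    ∃ q : G.Walk b v, (Walk.cons hb q).IsPath ∧ (Walk.cons hb q).length = G.dist w v := by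
  obtain ⟨q, hq⟩ :=
    (hb.reachable.symm.trans (reachable_of_mem_branch hv)).exists_walk_length_eq_dist
  have hlen : (Walk.cons hb q).length = G.dist w v := by
    rw [Walk.length_cons, hq, hv]
  exact ⟨q, Walk.isPath_of_length_eq_dist _ hlen, hlen⟩

/-- In a forest, the geodesics from `w` into two different branches glue to a geodesic, since a
walk that never backtracks is a path. -/
theorem IsAcyclic.dist_eq_add_of_mem_branch (hG : G.IsAcyclic) (hb : G.Adj w b) (hc : G.Adj w c)
    (hbc : b ≠ c) (hu : u ∈ G.branch w b) (hv : v ∈ G.branch w c) :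
    G.dist u v = G.dist w u + G.dist w v := by
  obtain ⟨p, hp, hpl⟩ := exists_isPath_cons_of_mem_branch hb hu
  obtain ⟨q, hq, hql⟩ := exists_isPath_cons_of_mem_branch hc hv
  have hpath : ((Walk.cons hb p).reverse.append (Walk.cons hc q)).IsPath := by
    have hp' := (hG.isPath_iff_isChain _).mp hp.reverse
    have hq' := (hG.isPath_iff_isChain _).mp hq
    rw [Walk.edges_reverse, Walk.edges_cons, List.reverse_cons] at hp'
    rw [Walk.edges_cons] at hq'
    rw [hG.isPath_iff_isChain, Walk.edges_append, Walk.edges_reverse, Walk.edges_cons,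
      Walk.edges_cons, List.reverse_cons, List.append_assoc, List.singleton_append,
      List.isChain_append_cons_cons]
    exact ⟨hp', by simp [hbc, hb.ne'], hq'⟩
  rw [← hG.length_eq_dist_of_isPath hpath, Walk.length_append, Walk.length_reverse, hpl, hql]

theorem IsAcyclic.eq_of_mem_branch (hG : G.IsAcyclic) (hb : G.Adj w b) (hc : G.Adj w c)
    (hvb : v ∈ G.branch w b) (hvc : v ∈ G.branch w c) : b = c := by
  by_contra hbc
  have := hG.dist_eq_add_of_mem_branch hb hc hbc hvb hvc
  rw [dist_self] at this
  exact ne_of_mem_branch hvb (Reachable.dist_eq_zero_iff (reachable_of_mem_branch hvb) |>.mp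
    (by omega))

theorem IsTree.mem_branch_of_dist_add_dist_eq (hT : G.IsTree) (hb : G.Adj w b)
    (hv : v ∈ G.branch w b) {x : V} (hwx : w ≠ x) (hx : G.dist w x + G.dist x v = G.dist w v) :
    x ∈ G.branch w b := by
  obtain ⟨c, hc, hxc⟩ := (hT.connected w x).exists_adj_mem_branch hwx
  obtain rfl : c = b := by
    by_contra hcb
    have := hT.isAcyclic.dist_eq_add_of_mem_branch hc hb hcb hxc hv
    rw [mem_branch] at hxc
    omega
  exact hxc

theorem IsTree.exists_mem_branch_dist_eq (hT : G.IsTree) (hb : G.Adj w b)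
    (hv : v ∈ G.branch w b) {i : ℕ} (hi : 1 ≤ i) (hiv : i ≤ G.dist w v) :
    ∃ x ∈ G.branch w b, G.dist w x = i := by
  obtain ⟨p, hp⟩ := (reachable_of_mem_branch hv).exists_walk_length_eq_dist
  have htake := dist_le (p.take i)
  have hdrop := dist_le (p.drop i)
  have htri := (hT.connected w (p.getVert i)).dist_triangle_left v
  rw [Walk.take_length, hp, min_eq_left hiv] at htake
  rw [Walk.drop_length, hp] at hdrop
  have hdepth : G.dist w (p.getVert i) = i := by omega
  refine ⟨_, hT.mem_branch_of_dist_add_dist_eq hb hv ?_ (by omega), hdepth⟩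
  rintro hw
  rw [← hw, dist_self] at hdepth
  omega

theorem IsTree.isLeaf_of_mem_branch_of_forall_dist_le (hT : G.IsTree) (hb : G.Adj w b) {l : V}
    (hl : l ∈ G.branch w b) (hmax : ∀ y ∈ G.branch w b, G.dist w y ≤ G.dist w l) :
    IsLeaf G l := by
  obtain ⟨p, hlp, hwp⟩ := (hT.connected l w).exists_adj_mem_branch (ne_of_mem_branch hl).symm
  refine Set.ncard_eq_one.mpr ⟨p, Set.eq_singleton_iff_unique_mem.mpr ⟨hlp, fun y hy => ?_⟩⟩
  rcases hT.dist_eq_dist_add_one_of_adj w hy with hparent | hchild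
  · refine hT.isAcyclic.eq_of_mem_branch hy hlp ?_ hwp
    rw [mem_branch, dist_comm, dist_comm (u := l), hparent]
  · obtain ⟨c, hc, hyc⟩ := (hT.connected w y).exists_adj_mem_branch
      (by rintro rfl; simp at hchild)
    have hlc := hT.mem_branch_of_dist_add_dist_eq hc hyc (ne_of_mem_branch hl)
      (by rw [dist_eq_one_iff_adj.mpr hy, hchild])
    obtain rfl := hT.isAcyclic.eq_of_mem_branch hb hc hl hlc
    have := hmax y hyc
    omega

lemma dist_le_ecc [Fintype V] (G : SimpleGraph V) (u v : V) : G.dist u v ≤ ecc G u :=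
  Finset.le_sup (Finset.mem_univ v)

lemma ecc_le_gdiam [Fintype V] (G : SimpleGraph V) (u : V) : ecc G u ≤ gdiam G :=
  Finset.le_sup (Finset.mem_univ u)

theorem IsTree.ball_eq_of_mem_branch {k : ℕ} (hT : G.IsTree) (hb : G.Adj w b)
    (hc : G.Adj w c) (hbc : b ≠ c) (hu : u ∈ G.branch w b) (hv : v ∈ G.branch w c)
    (hdepth : G.dist w u = G.dist w v)
    (hk : ∀ y ∈ G.branch w b ∪ G.branch w c, G.dist w u + G.dist w y ≤ k) :
    _root_.ball G k u = _root_.ball G k v := by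
  ext y
  simp only [_root_.ball, Set.mem_ofPred_eq]
  rcases eq_or_ne w y with rfl | hwy
  · rw [dist_comm, hdepth, dist_comm]
  obtain ⟨d, hd, hyd⟩ := (hT.connected w y).exists_adj_mem_branch hwy
  by_cases hdbc : d = b ∨ d = c
  · have hy : G.dist w u + G.dist w y ≤ k := hk y (by rcases hdbc with rfl | rfl <;> simp [hyd])
    have hu' := (hT.connected u w).dist_triangle_left y
    have hv' := (hT.connected v w).dist_triangle_left y
    rw [dist_comm (u := u) (v := w)] at hu'
    rw [dist_comm (u := v) (v := w)] at hv'
    exact iff_of_true (by omega) (by omega)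
  · obtain ⟨hdb, hdc⟩ := not_or.mp hdbc
    rw [hT.isAcyclic.dist_eq_add_of_mem_branch hb hd (Ne.symm hdb) hu hyd,
      hT.isAcyclic.dist_eq_add_of_mem_branch hc hd (Ne.symm hdc) hv hyd, hdepth]

theorem IsTree.exists_isLeaf_kTwin [Finite V] {k : ℕ} (hT : G.IsTree)
    (hb : G.Adj w b) (hc : G.Adj w c) (hbc : b ≠ c)
    (hshallow : ∀ y ∈ G.branch w b ∪ G.branch w c, 2 * G.dist w y ≤ k) :
    ∃ ℓ, IsLeaf G ℓ ∧ KTwin G k ℓ := by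
  have deepest : ∀ {b}, G.Adj w b →
      ∃ l ∈ G.branch w b, ∀ y ∈ G.branch w b, G.dist w y ≤ G.dist w l :=
    fun hb => Set.exists_max_image _ _ (Set.toFinite _) ⟨_, hb.mem_branch⟩
  obtain ⟨lb, hlb, hlbmax⟩ := deepest hb
  obtain ⟨lc, hlc, hlcmax⟩ := deepest hc
  wlog hle : G.dist w lc ≤ G.dist w lb generalizing b c lb lc
  · exact this hc hb hbc.symm (by rwa [Set.union_comm]) lc hlc hlcmax lb hlb hlbmax (by omega)
  obtain ⟨u, hu, hdepth⟩ :=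
    hT.exists_mem_branch_dist_eq hb hlb (by rw [mem_branch] at hlc; omega) hle
  refine ⟨lc, hT.isLeaf_of_mem_branch_of_forall_dist_le hc hlc hlcmax, u, ?_, ?_⟩
  · rintro rfl
    exact hbc (hT.isAcyclic.eq_of_mem_branch hb hc hu hlc)
  · refine hT.ball_eq_of_mem_branch hc hb hbc.symm hlc hu hdepth.symm fun y hy => ?_
    have := hshallow _ (Or.inr hlc)
    have := hshallow y (Set.union_comm _ _ ▸ hy)
    omega

theorem IsTree.exists_adj_forall_mem_branch_two_mul_dist_add_two_le_gdiam
    [Fintype V] (hT : G.IsTree) (hw : ¬ IsCentral G w) :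
    ∃ b, G.Adj w b ∧
      ∀ c, G.Adj w c → c ≠ b → ∀ y ∈ G.branch w c, 2 * G.dist w y + 2 ≤ gdiam G := by
  obtain ⟨z, hz⟩ : ∃ z, ecc G z < ecc G w := by simpa [IsCentral] using hw
  obtain ⟨ℓ, -, hℓ⟩ := Finset.exists_mem_eq_sup _ ⟨w, Finset.mem_univ w⟩ (G.dist w)
  change ecc G w = G.dist w ℓ at hℓ
  have hwz : w ≠ z := by rintro rfl; omega
  obtain ⟨b, hb, hℓb⟩ :=
    (hT.connected w ℓ).exists_adj_mem_branch (by rintro rfl; simp at hℓ; omega)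
  obtain ⟨d, hd, hzd⟩ := (hT.connected w z).exists_adj_mem_branch hwz
  obtain rfl : d = b := by
    by_contra hdb
    have := hT.isAcyclic.dist_eq_add_of_mem_branch hd hb hdb hzd hℓb
    have := G.dist_le_ecc z ℓ
    omega
  refine ⟨d, hd, fun c hc hcd y hy => ?_⟩
  have hzy := hT.isAcyclic.dist_eq_add_of_mem_branch hd hc hcd.symm hzd hy
  have hℓy := hT.isAcyclic.dist_eq_add_of_mem_branch hd hc hcd.symm hℓb hy
  have := G.dist_le_ecc z y
  have := (G.dist_le_ecc ℓ y).trans (G.ecc_le_gdiam ℓ)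
  have := (hT.connected w z).pos_dist_of_ne hwz
  omega

end SimpleGraph

theorem stmt_9_general {V : Type} [Fintype V] (k : ℕ) (T : SimpleGraph V)
    (hT : T.IsTree) (hdiam : gdiam T ≤ k + 3 - k % 2)
    (w : V) (hw : 3 ≤ (T.neighborSet w).ncard) (hnc : ¬ IsCentral T w) :
    ∃ ℓ, IsLeaf T ℓ ∧ KTwin T k ℓ := by
  obtain ⟨b, hb, hshallow⟩ := hT.exists_adj_forall_mem_branch_two_mul_dist_add_two_le_gdiam hnc
  have hothers : 1 < (T.neighborSet w \ {b}).ncard := by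
    rw [Set.ncard_sdiff_singleton_of_mem (s := T.neighborSet w) hb]
    omega
  obtain ⟨c, d, ⟨hc, hcb⟩, ⟨hd, hdb⟩, hcd⟩ := (Set.one_lt_ncard_iff (Set.toFinite _)).mp hothers
  refine hT.exists_isLeaf_kTwin hc hd hcd fun y hy => ?_
  have := hy.elim (hshallow c hc hcb y) (hshallow d hd hdb y)
  omega

/-- For `k ≥ 2`, if a tree `T` has diameter at most `k + 3 − (k mod 2)`
and has a branching vertex that is not central, then `T` has a leaf that is a `k`-twin. -/
theorem stmt_9 {V : Type} [Fintype V] (k : ℕ) (hk : 2 ≤ k) (T : SimpleGraph V)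
    (hT : T.IsTree) (hdiam : gdiam T ≤ k + 3 - k % 2)
    (w : V) (hw : 3 ≤ (T.neighborSet w).ncard) (hnc : ¬ IsCentral T w) :
    ∃ ℓ, IsLeaf T ℓ ∧ KTwin T k ℓ :=
  stmt_9_general k T hT hdiam w hw hnc
end
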